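/- arXiv:2512.13645 — 6 statements merged into one kernel-verified Lean document; each statement's English description precedes it below -/
import Mathlib

section
/- Under the stated assumptions, the population regression coefficient on T satisfies the decomposition β = Cov(Y, T − μ(X)) / (Var(T − μ(X)) + Var(Δ(X))) + Cov(Y, Δ(X)) / (Var(T − μ(X)) + Var(Δ(X))); that is, Cov(Y, T − Xᵀπ) = Cov(Y, T − μ(X)) + Cov(Y, Δ(X)) and Var(T − Xᵀπ) = Var(T − μ(X)) + Var(Δ(X)). -/
open MeasureTheory

/-- Population covariance `Cov(f, g) = E[fg] - E[f]E[g]`. -/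
noncomputable def pcov {Ω : Type*} [MeasurableSpace Ω] (μ : Measure Ω) (f g : Ω → ℝ) : ℝ :=
  (∫ ω, f ω * g ω ∂μ) - (∫ ω, f ω ∂μ) * (∫ ω, g ω ∂μ)

/-- Population variance `Var(f) = Cov(f, f)`. -/
noncomputable def pvar {Ω : Type*} [MeasurableSpace Ω] (μ : Measure Ω) (f : Ω → ℝ) : ℝ :=
  pcov μ f f

private lemma enn_half : (1 : ENNReal) / 1 = 1 / 2 + 1 / 2 := by
  rw [ENNReal.div_add_div_same, one_add_one_eq_two,
    ENNReal.div_self two_ne_zero ENNReal.ofNat_ne_top, one_div_one]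

lemma l2_mul_integrable {Ω : Type*} [MeasurableSpace Ω] {μ : Measure Ω} {f g : Ω → ℝ}
    (hf : MemLp f 2 μ) (hg : MemLp g 2 μ) :
    Integrable (fun ω => f ω * g ω) μ := by
  have h : MemLp (f • g) 1 μ := hg.smul (p := 2) (q := 2) (r := 1) hf
  rw [← memLp_one_iff_integrable]
  exact h.ae_eq (Filter.Eventually.of_forall fun ω => by simp [mul_comm])

lemma memℒp_two_condexp {Ω : Type*} {m : MeasurableSpace Ω} [m0 : MeasurableSpace Ω]
    {μ : Measure Ω} [IsFiniteMeasure μ] (hm : m ≤ m0) {T : Ω → ℝ}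
    (hT : MemLp T 2 μ) : MemLp (μ[T|m]) 2 μ := by
  set g : Lp ℝ 2 μ := (condExpL2 ℝ ℝ hm (hT.toLp T) : Lp ℝ 2 μ) with hg
  have hmem : MemLp (g : Ω → ℝ) 2 μ := Lp.memLp g
  have hae : (g : Ω → ℝ) =ᵐ[μ] μ[T|m] := by
    refine ae_eq_condExp_of_forall_setIntegral_eq hm (hT.integrable one_le_two) ?_ ?_ ?_
    · intro s hs hμs
      exact (hmem.integrable one_le_two).integrableOn
    · intro s hs hμs
      rw [hg, integral_condExpL2_eq hm (hT.toLp T) hs hμs.ne]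
      exact setIntegral_congr_ae (hm s hs) ((hT.coeFn_toLp).mono fun x hx _ => hx)
    · exact lpMeas.aestronglyMeasurable _
  exact hmem.ae_eq hae

lemma condexp_sub_integral_zero {Ω : Type*} {m : MeasurableSpace Ω} [m0 : MeasurableSpace Ω]
    {μ : Measure Ω} [IsFiniteMeasure μ] (hm : m ≤ m0) {T : Ω → ℝ}
    (hT : MemLp T 2 μ) : ∫ ω, (T ω - (μ[T|m]) ω) ∂μ = 0 := by
  rw [integral_sub (hT.integrable one_le_two)
    ((memℒp_two_condexp hm hT).integrable one_le_two),
    integral_condExp hm, sub_self]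

lemma condexp_orth {Ω : Type*} {m : MeasurableSpace Ω} [m0 : MeasurableSpace Ω]
    {μ : Measure Ω} [IsFiniteMeasure μ] (hm : m ≤ m0) {T g : Ω → ℝ}
    (hT : MemLp T 2 μ) (hg : MemLp g 2 μ) (hgm : StronglyMeasurable[m] g) :
    ∫ ω, (T ω - (μ[T|m]) ω) * g ω ∂μ = 0 := by
  have hμT2 : MemLp (μ[T|m]) 2 μ := memℒp_two_condexp hm hT
  have hgT : Integrable (g * T) μ := l2_mul_integrable hg hT
  have hpull : μ[g * T|m] =ᵐ[μ] g * μ[T|m] :=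
    condExp_mul_of_stronglyMeasurable_left hgm hgT (hT.integrable one_le_two)
  have key : ∫ ω, g ω * T ω ∂μ = ∫ ω, g ω * (μ[T|m]) ω ∂μ := by
    calc ∫ ω, g ω * T ω ∂μ = ∫ ω, (μ[g * T|m]) ω ∂μ := (integral_condExp hm).symm
      _ = ∫ ω, g ω * (μ[T|m]) ω ∂μ := integral_congr_ae hpull
  have h1 : ∫ ω, (T ω - (μ[T|m]) ω) * g ω ∂μ
      = ∫ ω, g ω * T ω ∂μ - ∫ ω, g ω * (μ[T|m]) ω ∂μ := by
    rw [← integral_sub (l2_mul_integrable hg hT) (l2_mul_integrable hg hμT2)]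
    apply integral_congr_ae
    filter_upwards with ω
    ring
  rw [h1, key, sub_self]

/-- Decomposition of the population regression coefficient on `T`:
`β = Cov(Y, T - μ(X)) / (Var(T - μ(X)) + Var(Δ(X))) + Cov(Y, Δ(X)) / (Var(T - μ(X)) + Var(Δ(X)))`,
together with `Cov(Y, T - Xᵀπ) = Cov(Y, T - μ(X)) + Cov(Y, Δ(X))` and
`Var(T - Xᵀπ) = Var(T - μ(X)) + Var(Δ(X))`. -/
theorem stmt0 {Ω : Type*} [MeasurableSpace Ω] (μ : Measure Ω) [IsProbabilityMeasure μ]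
    {d : ℕ} [NeZero d] (Y T : Ω → ℝ) (X : Ω → Fin d → ℝ)
    (hY : MemLp Y 2 μ) (hT : MemLp T 2 μ)
    (hTmeas : Measurable T) (hXmeas : Measurable X)
    (hXL2 : ∀ i, MemLp (fun ω => X ω i) 2 μ)
    (hX0 : ∀ ω, X ω 0 = 1)
    (π : Fin d → ℝ)
    (hπ : ∀ i, ∫ ω, X ω i * (T ω - ∑ j, π j * X ω j) ∂μ = 0)
    (hinv : IsUnit (Matrix.of fun i j : Fin d => ∫ ω, X ω i * X ω j ∂μ))
    (μT : Ω → ℝ) (hμT : μT = μ[T | MeasurableSpace.comap X inferInstance])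
    (Δ : Ω → ℝ) (hΔ : ∀ ω, Δ ω = μT ω - ∑ j, π j * X ω j)
    (hvar : 0 < pvar μ (fun ω => T ω - ∑ j, π j * X ω j))
    (β : ℝ)
    (hβ : β = pcov μ Y (fun ω => T ω - ∑ j, π j * X ω j)
        / pvar μ (fun ω => T ω - ∑ j, π j * X ω j)) :
    (β = pcov μ Y (fun ω => T ω - μT ω)
          / (pvar μ (fun ω => T ω - μT ω) + pvar μ Δ)
        + pcov μ Y Δ / (pvar μ (fun ω => T ω - μT ω) + pvar μ Δ))
    ∧ pcov μ Y (fun ω => T ω - ∑ j, π j * X ω j)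
        = pcov μ Y (fun ω => T ω - μT ω) + pcov μ Y Δ
    ∧ pvar μ (fun ω => T ω - ∑ j, π j * X ω j)
        = pvar μ (fun ω => T ω - μT ω) + pvar μ Δ := by
  have hm : MeasurableSpace.comap X inferInstance ≤ _ := hXmeas.comap_le
  have hXm : ∀ i, Measurable[MeasurableSpace.comap X inferInstance] fun ω => X ω i :=
    fun i => (measurable_pi_apply i).comp (Measurable.of_comap_le le_rfl)
  have hXπm : StronglyMeasurable[MeasurableSpace.comap X inferInstance]
      fun ω => ∑ j, π j * X ω j :=
    (Finset.measurable_sum Finset.univ fun j _ =>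
      measurable_const.mul (hXm j)).stronglyMeasurable
  have hμT2 : MemLp μT 2 μ := by rw [hμT]; exact memℒp_two_condexp hm hT
  have hXπ2 : MemLp (fun ω => ∑ j, π j * X ω j) 2 μ :=
    (memLp_finset_sum' Finset.univ fun j _ => (hXL2 j).const_mul (π j)).ae_eq
      (Filter.Eventually.of_forall fun ω => by simp)
  have hΔeq : Δ = fun ω => μT ω - ∑ j, π j * X ω j := funext hΔ
  have hΔ2 : MemLp Δ 2 μ := by rw [hΔeq]; exact hμT2.sub hXπ2
  have hΔm : StronglyMeasurable[MeasurableSpace.comap X inferInstance] Δ := by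
    rw [hΔeq, hμT]; exact stronglyMeasurable_condExp.sub hXπm
  have hf2 : MemLp (fun ω => T ω - μT ω) 2 μ := hT.sub hμT2
  -- zero integrals
  have hf0 : ∫ ω, (T ω - μT ω) ∂μ = 0 := by
    rw [hμT]; exact condexp_sub_integral_zero hm hT
  have horth : ∫ ω, (T ω - μT ω) * Δ ω ∂μ = 0 := by
    rw [hμT]
    exact condexp_orth hm hT hΔ2 hΔm
  -- integrability of all products used
  have iY := hY.integrable one_le_two
  have iT := hT.integrable one_le_two
  have iμT := hμT2.integrable one_le_two
  have iΔ := hΔ2.integrable one_le_two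
  have if' : Integrable (fun ω => T ω - μT ω) μ := iT.sub iμT
  have iYf : Integrable (fun ω => Y ω * (T ω - μT ω)) μ := l2_mul_integrable hY hf2
  have iYΔ : Integrable (fun ω => Y ω * Δ ω) μ := l2_mul_integrable hY hΔ2
  have iff : Integrable (fun ω => (T ω - μT ω) * (T ω - μT ω)) μ := l2_mul_integrable hf2 hf2
  have iΔΔ : Integrable (fun ω => Δ ω * Δ ω) μ := l2_mul_integrable hΔ2 hΔ2
  have ifΔ : Integrable (fun ω => (T ω - μT ω) * Δ ω) μ := l2_mul_integrable hf2 hΔ2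
  -- integral decompositions
  have h1 : ∫ ω, Y ω * (T ω - ∑ j, π j * X ω j) ∂μ
      = ∫ ω, Y ω * (T ω - μT ω) ∂μ + ∫ ω, Y ω * Δ ω ∂μ := by
    rw [← integral_add iYf iYΔ]
    apply integral_congr_ae; filter_upwards with ω; rw [hΔ]; ring
  have h2 : ∫ ω, (T ω - ∑ j, π j * X ω j) ∂μ
      = ∫ ω, (T ω - μT ω) ∂μ + ∫ ω, Δ ω ∂μ := by
    rw [← integral_add if' iΔ]
    apply integral_congr_ae; filter_upwards with ω; rw [hΔ]; ring
  have h3 : ∫ ω, (T ω - ∑ j, π j * X ω j) * (T ω - ∑ j, π j * X ω j) ∂μ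
      = ∫ ω, (T ω - μT ω) * (T ω - μT ω) ∂μ
        + 2 * ∫ ω, (T ω - μT ω) * Δ ω ∂μ + ∫ ω, Δ ω * Δ ω ∂μ := by
    have : ∫ ω, (T ω - ∑ j, π j * X ω j) * (T ω - ∑ j, π j * X ω j) ∂μ
        = ∫ ω, ((T ω - μT ω) * (T ω - μT ω)
            + ((T ω - μT ω) * Δ ω + ((T ω - μT ω) * Δ ω + Δ ω * Δ ω))) ∂μ := by
      apply integral_congr_ae; filter_upwards with ω
      rw [hΔ]; ring
    have iB : Integrable (fun ω => (T ω - μT ω) * Δ ω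
        + ((T ω - μT ω) * Δ ω + Δ ω * Δ ω)) μ := ifΔ.add (ifΔ.add iΔΔ)
    have iC : Integrable (fun ω => (T ω - μT ω) * Δ ω + Δ ω * Δ ω) μ := ifΔ.add iΔΔ
    rw [this]
    simp only [integral_add iff iB, integral_add ifΔ iC, integral_add ifΔ iΔΔ]
    ring
  have key2 : pcov μ Y (fun ω => T ω - ∑ j, π j * X ω j)
      = pcov μ Y (fun ω => T ω - μT ω) + pcov μ Y Δ := by
    simp only [pcov, h1, h2]; ring
  have key3 : pvar μ (fun ω => T ω - ∑ j, π j * X ω j)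
      = pvar μ (fun ω => T ω - μT ω) + pvar μ Δ := by
    simp only [pvar, pcov, h3, h2, horth, hf0]; ring
  refine ⟨?_, key2, key3⟩
  rw [hβ, key2, key3, add_div]
end

section
/- Yitzhaki's theorem (univariate case): the simple-regression population coefficient of Y on T satisfies Cov(Y, T)/Var(T) = ∫_{-∞}^{∞} m'(t) w(t) dt, where w(t) = E[T − E[T] | T > t]·P(T > t) / Var(T), the weights satisfy ∫_{-∞}^{∞} w(t) dt = 1, and w(t) ≥ 0 for all t. -/
open MeasureTheory Filter

open Set
open scoped ENNReal NNReal

section Aux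
set_option linter.unusedVariables false

lemma countable_right_isolated (Z : Set ℝ) :
    Set.Countable {t | t ∈ Z ∧ ∃ δ > 0, Ioo t (t + δ) ∩ Z = ∅} := by
  set E := {t | t ∈ Z ∧ ∃ δ > 0, Ioo t (t + δ) ∩ Z = ∅} with hE
  have hmem : ∀ t ∈ E, ∃ δ > 0, Ioo t (t + δ) ∩ Z = ∅ := fun t ht => ht.2
  choose! δ hδpos hδempty using hmem
  apply Set.PairwiseDisjoint.countable_of_Ioo (y := fun t => t + δ t)
  · intro s hs t ht hst
    rcases lt_or_gt_of_ne hst with hlt | hlt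
    · have h1 : s + δ s ≤ t := by
        by_contra hc
        push_neg at hc
        have : t ∈ Ioo s (s + δ s) ∩ Z := ⟨⟨hlt, hc⟩, ht.1⟩
        rw [hδempty s hs] at this
        exact this
      intro u hu1 hu2
      simp only [le_eq_subset, bot_eq_empty, ← subset_empty_iff]
      intro x hx
      have h2 := hu1 hx
      have h3 := hu2 hx
      exact absurd ((h2.2.trans_le h1).trans h3.1) (lt_irrefl x)
    · have h1 : t + δ t ≤ s := by
        by_contra hc
        push_neg at hc
        have : s ∈ Ioo t (t + δ t) ∩ Z := ⟨⟨hlt, hc⟩, hs.1⟩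
        rw [hδempty t ht] at this
        exact this
      intro u hu1 hu2
      simp only [le_eq_subset, bot_eq_empty, ← subset_empty_iff]
      intro x hx
      have h2 := hu1 hx
      have h3 := hu2 hx
      exact absurd ((h3.2.trans_le h1).trans h2.1) (lt_irrefl x)
  · intro t ht
    have := hδpos t ht
    linarith

lemma ae_zero_on_tail_zero {h : ℝ → ℝ} (hint : Integrable h) (Z : Set ℝ)
    (hZ : ∀ t ∈ Z, (∫ u in Set.Ioi t, h u) = 0) :
    ∀ᵐ t, t ∈ Z → h t = 0 := by
  set E := {t | t ∈ Z ∧ ∃ δ > 0, Ioo t (t + δ) ∩ Z = ∅} with hE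
  have hEc : Set.Countable E := countable_right_isolated Z
  have hEnull : ∀ᵐ t, t ∉ E := by
    have := hEc.measure_zero (volume : Measure ℝ)
    exact (MeasureTheory.measure_eq_zero_iff_ae_notMem).1 this
  have hL := IsUnifLocDoublingMeasure.ae_tendsto_average_norm_sub (μ := (volume : Measure ℝ))
    hint.locallyIntegrable 1
  filter_upwards [hL, hEnull] with t hLt hEt htZ
  -- t ∈ Z, not right-isolated
  have hacc : ∀ n : ℕ, ∃ z, z ∈ Ioo t (t + 1/(n+1)) ∩ Z := by
    intro n
    by_contra hc
    push_neg at hc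
    exact hEt ⟨htZ, 1/(n+1), by positivity, eq_empty_iff_forall_notMem.2 hc⟩
  choose z hz using hacc
  set δ : ℕ → ℝ := fun n => z n - t with hδ
  have hδpos : ∀ n, 0 < δ n := fun n => by have := (hz n).1.1; simp [hδ]; linarith
  have hδlt : ∀ n, δ n < 1/(n+1) := fun n => by have h1 := (hz n).1.2; have : (1:ℝ)/(n+1) = ((n:ℝ)+1)⁻¹ := one_div _; rw [hδ]; dsimp only; linarith [this ▸ h1]
  have hδ0 : Tendsto δ atTop (nhds 0) := by
    apply squeeze_zero (fun n => (hδpos n).le) (fun n => (hδlt n).le)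
    exact tendsto_one_div_add_atTop_nhds_zero_nat
  have hδ0' : Tendsto δ atTop (nhdsWithin 0 (Ioi 0)) :=
    tendsto_nhdsWithin_of_tendsto_nhds_of_eventually_within _ hδ0
      (Eventually.of_forall fun n => hδpos n)
  have havg : Tendsto (fun n => ⨍ y in Metric.closedBall t (δ n), ‖h y - h t‖) atTop (nhds 0) := by
    apply hLt (fun _ => t) δ hδ0'
    filter_upwards with n
    simp only [Metric.mem_closedBall, dist_self, one_mul]
    exact (hδpos n).le
  -- the bound
  have hbound : ∀ n, |h t| ≤ 2 * ⨍ y in Metric.closedBall t (δ n), ‖h y - h t‖ := by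
    intro n
    have hIoc : (∫ u in Ioc t (z n), h u) = 0 := by
      have hsplit : (∫ u in Ioi t, h u)
          = (∫ u in Ioc t (z n), h u) + ∫ u in Ioi (z n), h u := by
        rw [← setIntegral_union (Set.Ioc_disjoint_Ioi le_rfl) measurableSet_Ioi
          hint.integrableOn hint.integrableOn,
          Set.Ioc_union_Ioi_eq_Ioi (hz n).1.1.le]
      have h1 := hZ t htZ
      have h2 := hZ (z n) (hz n).2
      rw [h1, h2] at hsplit
      linarith
    have hsub : (∫ u in Ioc t (z n), (h u - h t)) = - (h t * δ n) := by
      rw [integral_sub hint.integrableOn (integrableOn_const (by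
        rw [Real.volume_Ioc]; exact ENNReal.ofReal_ne_top)), hIoc]
      simp [Real.volume_Ioc, ENNReal.toReal_ofReal (hδpos n).le]
      rw [max_eq_left (hδpos n).le]; simp only [hδ]
      ring
    have hb1 : |h t| * δ n ≤ ∫ u in Ioc t (z n), |h u - h t| := by
      calc |h t| * δ n = |∫ u in Ioc t (z n), (h u - h t)| := by
            rw [hsub, abs_neg, abs_mul, abs_of_nonneg (hδpos n).le]
        _ ≤ ∫ u in Ioc t (z n), |h u - h t| := by
            simpa [Real.norm_eq_abs] using
              norm_integral_le_integral_norm (f := fun u => h u - h t)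
                (μ := volume.restrict (Ioc t (z n)))
    have hb2 : (∫ u in Ioc t (z n), |h u - h t|)
        ≤ ∫ u in Metric.closedBall t (δ n), |h u - h t| := by
      apply setIntegral_mono_set
      · exact ((hint.integrableOn.sub (integrableOn_const (by
          rw [Real.closedBall_eq_Icc, Real.volume_Icc]; exact ENNReal.ofReal_ne_top))).abs)
      · filter_upwards with u using abs_nonneg _
      · apply HasSubset.Subset.eventuallyLE
        rw [Real.closedBall_eq_Icc]
        intro u hu
        constructor
        · simp [hδ] at hu ⊢; linarith [hu.1]
        · simp [hδ] at hu ⊢; linarith [hu.2]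
    have hvol : (volume (Metric.closedBall t (δ n))).toReal = 2 * δ n := by
      rw [Real.volume_closedBall, ENNReal.toReal_ofReal (by linarith [hδpos n])]
    have havg_eq : (∫ u in Metric.closedBall t (δ n), |h u - h t|)
        = (2 * δ n) * ⨍ y in Metric.closedBall t (δ n), ‖h y - h t‖ := by
      rw [setAverage_eq, measureReal_def, hvol]
      simp only [smul_eq_mul, Real.norm_eq_abs]
      rw [← mul_assoc, mul_inv_cancel₀ (by linarith [hδpos n]), one_mul]
    have := hb1.trans (hb2.trans_eq havg_eq)
    have h2δ : |h t| * δ n ≤ 2 * δ n * ⨍ y in Metric.closedBall t (δ n), ‖h y - h t‖ := this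
    nlinarith [hδpos n]
  have : Tendsto (fun n => 2 * ⨍ y in Metric.closedBall t (δ n), ‖h y - h t‖) atTop (nhds 0) := by
    simpa using havg.const_mul 2
  have hle : |h t| ≤ 0 := ge_of_tendsto this (Eventually.of_forall hbound)
  exact abs_nonpos_iff.1 hle

lemma cont_tail {h : ℝ → ℝ} (hh : Integrable h) :
    Continuous fun t => ∫ u in Ioi t, h u := by
  have e1 : ∀ t : ℝ, (∫ u in Ioi t, h u) = (∫ u, h u) - ∫ u in Iic t, h u := by
    intro t
    have := integral_add_compl (measurableSet_Iic (a := t)) hh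
    rw [compl_Iic] at this
    linarith
  have e2 : ∀ t : ℝ, (∫ u in Iic t, h u) = (∫ u in Iic 0, h u) + ∫ u in (0:ℝ)..t, h u := by
    intro t
    have := intervalIntegral.integral_Iic_sub_Iic (hh.integrableOn (s := Iic 0))
      (hh.integrableOn (s := Iic t))
    linarith
  have : (fun t => ∫ u in Ioi t, h u)
      = fun t => (∫ u, h u) - ((∫ u in Iic 0, h u) + ∫ u in (0:ℝ)..t, h u) :=
    funext fun t => by rw [e1 t, e2 t]
  rw [this]
  exact continuous_const.sub (continuous_const.add
    (intervalIntegral.continuous_primitive (fun a b => hh.intervalIntegrable) 0))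

lemma tail_split {h : ℝ → ℝ} (hh : Integrable h) {s t : ℝ} (hst : s ≤ t) :
    (∫ u in Ioc s t, h u) = (∫ u in Ioi s, h u) - ∫ u in Ioi t, h u := by
  have : (∫ u in Ioi s, h u) = (∫ u in Ioc s t, h u) + ∫ u in Ioi t, h u := by
    rw [← setIntegral_union (Set.Ioc_disjoint_Ioi le_rfl) measurableSet_Ioi
      hh.integrableOn hh.integrableOn, Set.Ioc_union_Ioi_eq_Ioi hst]
  linarith

lemma parts_Ioc {h : ℝ → ℝ} (hh : Integrable h)
    {m : ℝ → ℝ} (hm : Differentiable ℝ m)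
    {a b : ℝ} (hab : a ≤ b) (hm' : IntegrableOn (deriv m) (Ioc a b)) :
    ∫ t in Ioc a b, (deriv m t * (∫ u in Ioi t, h u) - m t * h t)
      = m b * (∫ u in Ioi b, h u) - m a * (∫ u in Ioi a, h u) := by
  set G : ℝ → ℝ := fun t => ∫ u in Ioi t, h u with hG
  set A : ℝ → ℝ := (Ioc a b).indicator (deriv m) with hA
  set B : ℝ → ℝ := (Ioc a b).indicator h with hB
  have hGc : Continuous G := cont_tail hh
  have hAint : Integrable A := (integrable_indicator_iff measurableSet_Ioc).2 hm'
  have hBint : Integrable B := (integrable_indicator_iff measurableSet_Ioc).2 hh.integrableOn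
  have hS : MeasurableSet {p : ℝ × ℝ | p.1 < p.2} :=
    measurableSet_lt measurable_fst measurable_snd
  set F : ℝ → ℝ → ℝ := fun s u =>
    ({p : ℝ × ℝ | p.1 < p.2}).indicator (fun p => A p.1 * B p.2) (s, u) with hF
  have hFint : Integrable (Function.uncurry F) (volume.prod volume) := by
    have : Function.uncurry F = ({p : ℝ × ℝ | p.1 < p.2}).indicator (fun p => A p.1 * B p.2) := by
      funext p
      simp [Function.uncurry, hF]
    rw [this]
    exact (hAint.mul_prod hBint).indicator hS
  -- bound for G on the compact interval
  obtain ⟨M, hM⟩ : ∃ M, ∀ s ∈ Icc a b, ‖G s‖ ≤ M :=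
    (isCompact_Icc).exists_bound_of_continuousOn hGc.continuousOn
  have hGb : ∀ᵐ s ∂(volume.restrict (Ioc a b)), ‖G s‖ ≤ M := by
    filter_upwards [ae_restrict_mem measurableSet_Ioc] with s hs
    exact hM s ⟨hs.1.le, hs.2⟩
  have hmG_int : IntegrableOn (fun s => deriv m s * G s) (Ioc a b) := by
    have := hm'.bdd_mul (c := M) hGc.aestronglyMeasurable.restrict hGb
    refine this.congr (Eventually.of_forall fun x => ?_)
    show G x * deriv m x = deriv m x * G x
    exact mul_comm _ _
  obtain ⟨M', hM'⟩ : ∃ M', ∀ s ∈ Icc a b, ‖m s‖ ≤ M' :=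
    (isCompact_Icc).exists_bound_of_continuousOn hm.continuous.continuousOn
  have hmb : ∀ᵐ s ∂(volume.restrict (Ioc a b)), ‖m s‖ ≤ M' := by
    filter_upwards [ae_restrict_mem measurableSet_Ioc] with s hs
    exact hM' s ⟨hs.1.le, hs.2⟩
  have hmh_int : IntegrableOn (fun s => m s * h s) (Ioc a b) := by
    have := hh.integrableOn.bdd_mul (c := M') hm.continuous.aestronglyMeasurable.restrict hmb
    refine this.congr (Eventually.of_forall fun x => ?_)
    show m x * h x = m x * h x
    rfl
  -- FTC for m
  have hFTC : ∀ u ∈ Icc a b, (∫ s in Ioc a u, deriv m s) = m u - m a := by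
    intro u hu
    rw [← intervalIntegral.integral_of_le hu.1]
    exact intervalIntegral.integral_eq_sub_of_hasDerivAt
      (fun x _ => (hm x).hasDerivAt)
      ((intervalIntegrable_iff_integrableOn_Ioc_of_le hu.1).2
        (hm'.mono_set (Ioc_subset_Ioc_right hu.2)))
  -- Fubini
  have hswap := integral_integral_swap hFint
  -- evaluate LHS of swap
  have hLHS : (∫ s, ∫ u, F s u) = ∫ s in Ioc a b, deriv m s * (G s - G b) := by
    have e1 : ∀ s, (∫ u, F s u) = A s * ∫ u in Ioi s, B u := by
      intro s
      have : (fun u => F s u) = fun u => (Ioi s).indicator (fun u => A s * B u) u := by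
        funext u
        by_cases hsu : s < u
        · simp [hF, indicator_of_mem, hsu, Set.mem_Ioi.2 hsu]
        · simp [hF, indicator_of_notMem, hsu, fun h => hsu h]
      rw [this, integral_indicator measurableSet_Ioi, integral_const_mul]
    simp only [e1]
    have e2 : (fun s => A s * ∫ u in Ioi s, B u)
        = (Ioc a b).indicator (fun s => deriv m s * (G s - G b)) := by
      funext s
      by_cases hs : s ∈ Ioc a b
      · rw [Set.indicator_of_mem hs, hA, Set.indicator_of_mem hs]
        congr 1
        rw [hB, setIntegral_indicator measurableSet_Ioc]
        have : Ioi s ∩ Ioc a b = Ioc s b := by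
          ext u
          simp only [mem_inter_iff, mem_Ioi, mem_Ioc]
          exact ⟨fun ⟨h1, _, h3⟩ => ⟨h1, h3⟩, fun ⟨h1, h2⟩ => ⟨h1, hs.1.trans h1, h2⟩⟩
        rw [this, tail_split hh hs.2]
      · simp [hA, Set.indicator_of_notMem hs]
    rw [e2, integral_indicator measurableSet_Ioc]
  -- evaluate RHS of swap
  have hRHS : (∫ u, ∫ s, F s u) = ∫ u in Ioc a b, h u * (m u - m a) := by
    have e1 : ∀ u, (∫ s, F s u) = (∫ s in Iio u, A s) * B u := by
      intro u
      have : (fun s => F s u) = fun s => (Iio u).indicator (fun s => A s * B u) s := by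
        funext s
        by_cases hsu : s < u
        · simp [hF, indicator_of_mem, hsu, Set.mem_Iio.2 hsu]
        · simp [hF, indicator_of_notMem, hsu, fun h => hsu h]
      rw [this, integral_indicator measurableSet_Iio, integral_mul_const]
    simp only [e1]
    have e2 : (fun u => (∫ s in Iio u, A s) * B u)
        = (Ioc a b).indicator (fun u => h u * (m u - m a)) := by
      funext u
      by_cases hu : u ∈ Ioc a b
      · rw [Set.indicator_of_mem hu, hB, Set.indicator_of_mem hu, mul_comm]
        congr 1
        rw [hA, setIntegral_indicator measurableSet_Ioc]
        have : Iio u ∩ Ioc a b = Ioo a u := by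
          ext s
          simp only [mem_inter_iff, mem_Iio, mem_Ioc, mem_Ioo]
          exact ⟨fun ⟨h1, h2, _⟩ => ⟨h2, h1⟩, fun ⟨h1, h2⟩ => ⟨h2, h1, h2.le.trans hu.2⟩⟩
        rw [this, ← integral_Ioc_eq_integral_Ioo, hFTC u ⟨hu.1.le, hu.2⟩]
      · simp [hB, Set.indicator_of_notMem hu]
    rw [e2, integral_indicator measurableSet_Ioc]
  rw [hLHS, hRHS] at hswap
  -- expand both sides
  have hL2 : (∫ s in Ioc a b, deriv m s * (G s - G b))
      = (∫ s in Ioc a b, deriv m s * G s) - (m b - m a) * G b := by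
    have : (fun s => deriv m s * (G s - G b))
        = fun s => deriv m s * G s - deriv m s * G b := by funext s; ring
    rw [this, integral_sub hmG_int (hm'.mul_const (G b)), integral_mul_const,
      hFTC b ⟨hab, le_rfl⟩]
  have hR2 : (∫ u in Ioc a b, h u * (m u - m a))
      = (∫ u in Ioc a b, m u * h u) - m a * (G a - G b) := by
    have : (fun u => h u * (m u - m a)) = fun u => m u * h u - h u * m a := by
      funext u; ring
    rw [this, integral_sub hmh_int (hh.integrableOn.mul_const (m a)), integral_mul_const,
      tail_split hh hab]
    ring
  rw [hL2, hR2] at hswap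
  rw [integral_sub hmG_int hmh_int]
  have : G a = ∫ u in Ioi a, h u := rfl
  linarith [hswap]

lemma yitzhaki_key {h : ℝ → ℝ} (hh : Integrable h)
    {m : ℝ → ℝ} (hm : Differentiable ℝ m)
    (hG_nonneg : ∀ t, 0 ≤ ∫ u in Ioi t, h u)
    (hint1 : Integrable fun t => deriv m t * ∫ u in Ioi t, h u)
    (hint2 : Integrable fun t => m t * h t)
    (htop : Tendsto (fun t => m t * ∫ u in Ioi t, h u) atTop (nhds 0))
    (hbot : Tendsto (fun t => m t * ∫ u in Ioi t, h u) atBot (nhds 0)) :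
    (∫ t, deriv m t * ∫ u in Ioi t, h u) = ∫ t, m t * h t := by
  set G : ℝ → ℝ := fun t => ∫ u in Ioi t, h u with hGdef
  have hGc : Continuous G := cont_tail hh
  set F : ℝ → ℝ := fun t => deriv m t * G t - m t * h t with hFdef
  have hFint : Integrable F := hint1.sub hint2
  set U : Set ℝ := {t | 0 < G t} with hUdef
  have hUopen : IsOpen U := isOpen_lt continuous_const hGc
  have hZG : ∀ t, t ∉ U → G t = 0 := fun t ht => le_antisymm (not_lt.1 ht) (hG_nonneg t)
  -- h vanishes a.e. on the complement of U
  have hZh : ∀ᵐ t, t ∈ Uᶜ → h t = 0 :=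
    ae_zero_on_tail_zero hh Uᶜ (fun t ht => hZG t ht)
  -- local integrability of deriv m on compacts inside U
  have hm'loc : ∀ a b : ℝ, a ≤ b → Icc a b ⊆ U → IntegrableOn (deriv m) (Ioc a b) := by
    intro a b hab hsub
    obtain ⟨tmin, htmin_mem, htmin⟩ :=
      isCompact_Icc.exists_isMinOn (nonempty_Icc.2 hab) hGc.continuousOn
    have hε : 0 < G tmin := hsub htmin_mem
    refine Integrable.mono' ((hint1.abs.div_const (G tmin)).integrableOn)
      ((measurable_deriv m).aestronglyMeasurable.restrict) ?_
    filter_upwards [ae_restrict_mem measurableSet_Ioc] with t ht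
    have htI : t ∈ Icc a b := ⟨ht.1.le, ht.2⟩
    have hGt : G tmin ≤ G t := htmin htI
    have h1 : |deriv m t| * G tmin ≤ |deriv m t| * G t :=
      mul_le_mul_of_nonneg_left hGt (abs_nonneg _)
    have h2 : |deriv m t * G t| = |deriv m t| * G t := by
      rw [abs_mul, abs_of_nonneg (hG_nonneg t)]
    rw [Real.norm_eq_abs]
    rw [le_div_iff₀ hε]
    calc |deriv m t| * G tmin ≤ |deriv m t| * G t := h1
      _ = |deriv m t * G t| := h2.symm
  -- each connected component of U contributes zero
  have comp_zero : ∀ x₀ ∈ U, (∫ t in connectedComponentIn U x₀, F t) = 0 := by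
    intro x₀ hx₀
    set C := connectedComponentIn U x₀ with hCdef
    have hCopen : IsOpen C := hUopen.connectedComponentIn
    have hCsub : C ⊆ U := connectedComponentIn_subset U x₀
    have hx₀C : x₀ ∈ C := mem_connectedComponentIn hx₀
    have hCord : OrdConnected C := isPreconnected_connectedComponentIn.ordConnected
    -- boundary points of C outside C have G = 0
    have hbd : ∀ y ∈ closure C, y ∉ C → G y = 0 := by
      intro y hyc hyn
      by_contra hGy
      have hyU : y ∈ U := lt_of_le_of_ne (hG_nonneg y) (Ne.symm hGy)
      have hy_mem : y ∈ connectedComponentIn U y := mem_connectedComponentIn hyU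
      obtain ⟨z, hz, hzC⟩ :=
        mem_closure_iff_nhds.1 hyc _ ((hUopen.connectedComponentIn).mem_nhds hy_mem)
      have e1 : C = connectedComponentIn U z := connectedComponentIn_eq hzC
      have e2 : connectedComponentIn U y = connectedComponentIn U z := connectedComponentIn_eq hz
      exact hyn (by rw [hCdef, ← hCdef, e1, ← e2]; exact hy_mem)
    -- construct the upper sequence
    have hupper : ∃ b : ℕ → ℝ, (∀ n, b n ∈ C) ∧ (∀ n, x₀ ≤ b n) ∧ Monotone b ∧
        (∀ y ∈ C, ∀ᶠ n in atTop, y ≤ b n) ∧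
        Tendsto (fun n => m (b n) * G (b n)) atTop (nhds 0) := by
      by_cases hA : BddAbove C
      · set β := sSup C with hβ
        have hne : C.Nonempty := ⟨x₀, hx₀C⟩
        have hβc : β ∈ closure C := csSup_mem_closure hne hA
        have hβn : β ∉ C := by
          intro hβC
          obtain ⟨ε, hε, hsub⟩ := Metric.isOpen_iff.1 hCopen β hβC
          have : β + ε/2 ∈ C := hsub (by
            simp only [Metric.mem_ball, Real.dist_eq, add_sub_cancel_left]
            rw [abs_of_pos (by linarith)]; linarith)
          have := le_csSup hA this
          linarith
        have hGβ : G β = 0 := hbd β hβc hβn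
        have hx₀β : x₀ < β :=
          lt_of_le_of_ne (le_csSup hA hx₀C) (fun he => hβn (he ▸ hx₀C))
        have hIco : Ico x₀ β ⊆ C := by
          intro y hy
          obtain ⟨z, hzC, hz⟩ := exists_lt_of_lt_csSup hne hy.2
          exact hCord.out hx₀C hzC ⟨hy.1, hz.le⟩
        refine ⟨fun n => β - (β - x₀)/(n+1), fun n => ?_, fun n => ?_, ?_, ?_, ?_⟩
        · apply hIco
          constructor
          · have h1 : (β - x₀)/((n:ℝ)+1) ≤ β - x₀ := by
              apply div_le_self (by linarith) (by exact_mod_cast le_add_of_nonneg_left (Nat.cast_nonneg n))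
            linarith
          · have h1 : 0 < (β - x₀)/((n:ℝ)+1) := div_pos (by linarith) (by positivity)
            linarith
        · have h1 : (β - x₀)/((n:ℝ)+1) ≤ β - x₀ := by
            apply div_le_self (by linarith) (by exact_mod_cast le_add_of_nonneg_left (Nat.cast_nonneg n))
          linarith
        · intro i j hij
          have : (β - x₀)/((j:ℝ)+1) ≤ (β - x₀)/((i:ℝ)+1) := by
            apply div_le_div_of_nonneg_left (by linarith) (by positivity)
            linarith [(Nat.cast_le (α := ℝ)).2 hij]
          simp only
          linarith
        · intro y hyC
          have hylt : y < β :=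
            lt_of_le_of_ne (le_csSup hA hyC) (fun he => hβn (he ▸ hyC))
          have htb : Tendsto (fun n : ℕ => β - (β - x₀)/(n+1)) atTop (nhds β) := by
            have h0 : Tendsto (fun n : ℕ => (β - x₀) * (1/(n+1))) atTop (nhds 0) := by
              simpa using tendsto_one_div_add_atTop_nhds_zero_nat.const_mul (β - x₀)
            have : Tendsto (fun n : ℕ => β - (β - x₀) * (1/(n+1))) atTop (nhds (β - 0)) :=
              tendsto_const_nhds.sub h0
            simpa [mul_one_div, div_eq_mul_inv] using this
          filter_upwards [htb.eventually_const_lt hylt] with n hn using hn.le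
        · have htb : Tendsto (fun n : ℕ => β - (β - x₀)/(n+1)) atTop (nhds β) := by
            have h0 : Tendsto (fun n : ℕ => (β - x₀) * (1/(n+1))) atTop (nhds 0) := by
              simpa using tendsto_one_div_add_atTop_nhds_zero_nat.const_mul (β - x₀)
            have : Tendsto (fun n : ℕ => β - (β - x₀) * (1/(n+1))) atTop (nhds (β - 0)) :=
              tendsto_const_nhds.sub h0
            simpa [mul_one_div, div_eq_mul_inv] using this
          have hc : Tendsto (fun t => m t * G t) (nhds β) (nhds (m β * G β)) :=
            ((hm.continuous.mul hGc).tendsto β)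
          have := hc.comp htb
          rw [hGβ, mul_zero] at this
          exact this
      · refine ⟨fun n => x₀ + n, fun n => ?_, fun n => by simp, ?_, ?_, ?_⟩
        · obtain ⟨z, hzC, hz⟩ := not_bddAbove_iff.1 hA (x₀ + n)
          exact hCord.out hx₀C hzC ⟨by simp, hz.le⟩
        · intro i j hij
          simp only [add_le_add_iff_left, Nat.cast_le]
          exact hij
        · intro y hyC
          have : Tendsto (fun n : ℕ => x₀ + (n:ℝ)) atTop atTop :=
            tendsto_atTop_add_const_left _ _ tendsto_natCast_atTop_atTop
          exact this.eventually (eventually_ge_atTop y)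
        · have : Tendsto (fun n : ℕ => x₀ + (n:ℝ)) atTop atTop :=
            tendsto_atTop_add_const_left _ _ tendsto_natCast_atTop_atTop
          exact htop.comp this
    -- construct the lower sequence
    have hlower : ∃ a : ℕ → ℝ, (∀ n, a n ∈ C) ∧ (∀ n, a n ≤ x₀) ∧ Antitone a ∧
        (∀ y ∈ C, ∀ᶠ n in atTop, a n < y) ∧
        Tendsto (fun n => m (a n) * G (a n)) atTop (nhds 0) := by
      by_cases hA : BddBelow C
      · set α := sInf C with hα
        have hne : C.Nonempty := ⟨x₀, hx₀C⟩
        have hαc : α ∈ closure C := csInf_mem_closure hne hA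
        have hαn : α ∉ C := by
          intro hαC
          obtain ⟨ε, hε, hsub⟩ := Metric.isOpen_iff.1 hCopen α hαC
          have : α - ε/2 ∈ C := hsub (by
            simp only [Metric.mem_ball, Real.dist_eq, sub_sub_cancel_left]
            rw [abs_of_neg (by linarith)]; linarith)
          have := csInf_le hA this
          linarith
        have hGα : G α = 0 := hbd α hαc hαn
        have hαx₀ : α < x₀ :=
          lt_of_le_of_ne (csInf_le hA hx₀C) (fun he => hαn (he ▸ hx₀C))
        have hIoc : Ioc α x₀ ⊆ C := by
          intro y hy
          obtain ⟨z, hzC, hz⟩ := exists_lt_of_csInf_lt hne hy.1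
          exact hCord.out hzC hx₀C ⟨hz.le, hy.2⟩
        have htb : Tendsto (fun n : ℕ => α + (x₀ - α)/(n+1)) atTop (nhds α) := by
          have h0 : Tendsto (fun n : ℕ => (x₀ - α) * (1/(n+1))) atTop (nhds 0) := by
            simpa using tendsto_one_div_add_atTop_nhds_zero_nat.const_mul (x₀ - α)
          have : Tendsto (fun n : ℕ => α + (x₀ - α) * (1/(n+1))) atTop (nhds (α + 0)) :=
            tendsto_const_nhds.add h0
          simpa [mul_one_div, div_eq_mul_inv] using this
        refine ⟨fun n => α + (x₀ - α)/(n+1), fun n => ?_, fun n => ?_, ?_, ?_, ?_⟩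
        · apply hIoc
          constructor
          · have h1 : 0 < (x₀ - α)/((n:ℝ)+1) := div_pos (by linarith) (by positivity)
            linarith
          · have h1 : (x₀ - α)/((n:ℝ)+1) ≤ x₀ - α := by
              apply div_le_self (by linarith)
                (by exact_mod_cast le_add_of_nonneg_left (Nat.cast_nonneg n))
            linarith
        · have h1 : (x₀ - α)/((n:ℝ)+1) ≤ x₀ - α := by
            apply div_le_self (by linarith)
              (by exact_mod_cast le_add_of_nonneg_left (Nat.cast_nonneg n))
          linarith
        · intro i j hij
          have : (x₀ - α)/((j:ℝ)+1) ≤ (x₀ - α)/((i:ℝ)+1) := by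
            apply div_le_div_of_nonneg_left (by linarith) (by positivity)
            linarith [(Nat.cast_le (α := ℝ)).2 hij]
          simp only
          linarith
        · intro y hyC
          have hylt : α < y :=
            lt_of_le_of_ne (csInf_le hA hyC) (fun he => hαn (he ▸ hyC))
          exact htb.eventually_lt_const hylt
        · have hc : Tendsto (fun t => m t * G t) (nhds α) (nhds (m α * G α)) :=
            ((hm.continuous.mul hGc).tendsto α)
          have := hc.comp htb
          rw [hGα, mul_zero] at this
          exact this
      · have hten : Tendsto (fun n : ℕ => x₀ - (n:ℝ)) atTop atBot := by
          apply tendsto_atBot_add_const_left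
          exact (tendsto_neg_atBot_iff).2 tendsto_natCast_atTop_atTop
        refine ⟨fun n => x₀ - n, fun n => ?_, fun n => by simp, ?_, ?_, ?_⟩
        · obtain ⟨z, hzC, hz⟩ := not_bddBelow_iff.1 hA (x₀ - n)
          exact hCord.out hzC hx₀C ⟨hz.le, by simp⟩
        · intro i j hij
          simp only [sub_le_sub_iff_left, Nat.cast_le]
          exact hij
        · intro y hyC
          exact hten.eventually (eventually_lt_atBot y)
        · exact hbot.comp hten
    -- combine the sequences
    obtain ⟨bb, hbbC, hbbge, hbbmono, hbbcover, hbblim⟩ := hupper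
    obtain ⟨aa, haaC, haale, haamono, haacover, haalim⟩ := hlower
    set s : ℕ → Set ℝ := fun n => Ioc (aa n) (bb n) with hs
    have habn : ∀ n, aa n ≤ bb n := fun n => (haale n).trans (hbbge n)
    have hsubC : ∀ n, Icc (aa n) (bb n) ⊆ C := fun n y hy => hCord.out (haaC n) (hbbC n) hy
    have hmono : Monotone s := fun i j hij y hy =>
      ⟨lt_of_le_of_lt (haamono hij) hy.1, hy.2.trans (hbbmono hij)⟩
    have hunion : (⋃ n, s n) = C := by
      apply subset_antisymm
      · exact iUnion_subset fun n y hy => hsubC n ⟨hy.1.le, hy.2⟩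
      · intro y hy
        obtain ⟨n, h1, h2⟩ := ((haacover y hy).and (hbbcover y hy)).exists
        exact mem_iUnion.2 ⟨n, h1, h2⟩
    have hlim1 : Tendsto (fun n => ∫ t in s n, F t) atTop (nhds (∫ t in ⋃ n, s n, F t)) :=
      tendsto_setIntegral_of_monotone (fun n => measurableSet_Ioc) hmono hFint.integrableOn
    have heval : ∀ n, (∫ t in s n, F t) = m (bb n) * G (bb n) - m (aa n) * G (aa n) := by
      intro n
      exact parts_Ioc hh hm (habn n) (hm'loc _ _ (habn n) ((hsubC n).trans hCsub))
    have hlim2 : Tendsto (fun n => ∫ t in s n, F t) atTop (nhds 0) := by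
      simp only [heval]
      simpa using hbblim.sub haalim
    rw [hunion] at hlim1
    exact tendsto_nhds_unique hlim1 hlim2
  -- decompose U into components
  set comps : Set (Set ℝ) := (fun x => connectedComponentIn U x) '' U with hcomps
  have hsubrange : comps ⊆ Set.range (fun q : ℚ => connectedComponentIn U (q:ℝ)) := by
    rintro _ ⟨x, hxU, rfl⟩
    have hopen : IsOpen (connectedComponentIn U x) := hUopen.connectedComponentIn
    obtain ⟨q, hq⟩ :=
      Rat.denseRange_cast.exists_mem_open hopen ⟨x, mem_connectedComponentIn hxU⟩
    exact ⟨q, (connectedComponentIn_eq hq).symm⟩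
  have hcc : comps.Countable := (Set.countable_range _).mono hsubrange
  haveI := hcc.to_subtype
  have hmeas : ∀ c : comps, MeasurableSet (c : Set ℝ) := by
    rintro ⟨_, ⟨x, hxU, rfl⟩⟩
    exact (hUopen.connectedComponentIn).measurableSet
  have hdisj : Pairwise (Function.onFun Disjoint (fun c : comps => (c : Set ℝ))) := by
    rintro ⟨C1, ⟨x1, hx1, rfl⟩⟩ ⟨C2, ⟨x2, hx2, rfl⟩⟩ hne
    rw [Function.onFun, Set.disjoint_left]
    intro z hz1 hz2
    apply hne
    apply Subtype.ext
    simp only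
    rw [connectedComponentIn_eq hz1, ← connectedComponentIn_eq hz2]
  have hUeq : (⋃ c : comps, (c : Set ℝ)) = U := by
    apply subset_antisymm
    · refine iUnion_subset ?_
      rintro ⟨_, ⟨x, hxU, rfl⟩⟩
      exact connectedComponentIn_subset U x
    · intro x hx
      exact mem_iUnion.2 ⟨⟨_, ⟨x, hx, rfl⟩⟩, mem_connectedComponentIn hx⟩
  have hUint : (∫ t in U, F t) = 0 := by
    rw [← hUeq, integral_iUnion hmeas hdisj (hFint.integrableOn)]
    have hzero : ∀ c : comps, (∫ t in (c : Set ℝ), F t) = 0 := by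
      rintro ⟨_, ⟨x, hxU, rfl⟩⟩
      exact comp_zero x hxU
    simp [hzero]
  have hZint : (∫ t in Uᶜ, F t) = 0 := by
    apply integral_eq_zero_of_ae
    rw [EventuallyEq, ae_restrict_iff' hUopen.measurableSet.compl]
    filter_upwards [hZh] with t ht htc
    have h1 : G t = 0 := hZG t htc
    have h2 : h t = 0 := ht htc
    simp [hFdef, h1, h2]
  have hFzero : (∫ t, F t) = 0 := by
    rw [← integral_add_compl hUopen.measurableSet hFint, hUint, hZint, add_zero]
  have hsplit : (∫ t, F t) = (∫ t, deriv m t * ∫ u in Ioi t, h u) - ∫ t, m t * h t :=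
    integral_sub hint1 hint2
  linarith

variable {Ω : Type*} [MeasurableSpace Ω] {μ : Measure Ω} [IsProbabilityMeasure μ]

lemma transfer_int {T : Ω → ℝ} (hTmeas : Measurable T) {fT : ℝ → ℝ}
    (hfT_nonneg : ∀ t, 0 ≤ fT t) (hfT_meas : Measurable fT)
    (hfT : Measure.map T μ = volume.withDensity fun t => ENNReal.ofReal (fT t))
    {g : ℝ → ℝ} (hg : Measurable g) :
    Integrable (fun ω => g (T ω)) μ ↔ Integrable (fun u => g u * fT u) := by
  rw [show (fun ω => g (T ω)) = g ∘ T from rfl,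
    ← integrable_map_measure hg.aestronglyMeasurable hTmeas.aemeasurable, hfT,
    integrable_withDensity_iff (by exact hfT_meas.ennreal_ofReal)
      (by filter_upwards with t using ENNReal.ofReal_lt_top)]
  have : (fun u => g u * (ENNReal.ofReal (fT u)).toReal) = fun u => g u * fT u := by
    funext u; rw [ENNReal.toReal_ofReal (hfT_nonneg u)]
  rw [this]

lemma transfer_eq {T : Ω → ℝ} (hTmeas : Measurable T) {fT : ℝ → ℝ}
    (hfT_nonneg : ∀ t, 0 ≤ fT t) (hfT_meas : Measurable fT)
    (hfT : Measure.map T μ = volume.withDensity fun t => ENNReal.ofReal (fT t))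
    {g : ℝ → ℝ} (hg : Measurable g) :
    ∫ ω, g (T ω) ∂μ = ∫ u, g u * fT u := by
  rw [← integral_map hTmeas.aemeasurable hg.aestronglyMeasurable, hfT]
  have : (volume.withDensity fun t => ENNReal.ofReal (fT t))
      = volume.withDensity fun t => ((fT t).toNNReal : ℝ≥0∞) := rfl
  rw [this, integral_withDensity_eq_integral_smul (by exact hfT_meas.real_toNNReal) g]
  congr 1
  funext u
  rw [NNReal.smul_def, smul_eq_mul, Real.coe_toNNReal _ (hfT_nonneg u), mul_comm]

lemma tail_eq_Iic {h : ℝ → ℝ} (hh : Integrable h) (htot : (∫ u, h u) = 0) (t : ℝ) :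
    (∫ u in Ioi t, h u) = ∫ u in Iic t, (-h u) := by
  have := integral_add_compl (measurableSet_Iic (a := t)) hh
  rw [compl_Iic] at this
  rw [integral_neg]
  linarith

lemma tail_nonneg {h : ℝ → ℝ} (hh : Integrable h) (htot : (∫ u, h u) = 0) {c : ℝ}
    (hpos : ∀ u, c ≤ u → 0 ≤ h u) (hneg : ∀ u, u ≤ c → h u ≤ 0) (t : ℝ) :
    0 ≤ ∫ u in Ioi t, h u := by
  rcases le_or_gt c t with hct | htc
  · exact setIntegral_nonneg measurableSet_Ioi fun u hu => hpos u (hct.trans hu.le)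
  · rw [tail_eq_Iic hh htot t]
    exact setIntegral_nonneg measurableSet_Iic fun u hu =>
      neg_nonneg.2 (hneg u (hu.trans htc.le))

lemma tail_total_integral {h : ℝ → ℝ} (hh : Integrable h) (hhm : Measurable h)
    (htot : (∫ u, h u) = 0) {c : ℝ}
    (hpos : ∀ u, c ≤ u → 0 ≤ h u) (hneg : ∀ u, u ≤ c → h u ≤ 0)
    (hG_int : Integrable (fun t => ∫ u in Ioi t, h u))
    (hH_int : Integrable (fun u => h u * (u - c))) :
    (∫ t, ∫ u in Ioi t, h u) = ∫ u, h u * (u - c) := by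
  set G : ℝ → ℝ := fun t => ∫ u in Ioi t, h u with hGdef
  set H : ℝ → ℝ := fun u => h u * (u - c) with hHdef
  have hGc : Continuous G := cont_tail hh
  have hGnn : ∀ t, 0 ≤ G t := tail_nonneg hh htot hpos hneg
  have hHnn : ∀ u, 0 ≤ H u := by
    intro u
    rcases le_or_gt c u with hcu | huc
    · exact mul_nonneg (hpos u hcu) (by linarith)
    · have h1 := hneg u huc.le
      have : H u = h u * (u - c) := rfl
      rw [this]
      nlinarith
  set nnp : ℝ → ℝ≥0∞ := fun u => ENNReal.ofReal (h u) with hnnp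
  set nnm : ℝ → ℝ≥0∞ := fun u => ENNReal.ofReal (-h u) with hnnm
  -- Part A : over Ici c
  have hA : ENNReal.ofReal (∫ t in Ici c, G t) = ∫⁻ u in Ici c, ENNReal.ofReal (H u) := by
    rw [ofReal_integral_eq_lintegral_ofReal hG_int.integrableOn
      (Eventually.of_forall fun t => hGnn t)]
    -- pointwise identification on Ici c
    have e1 : ∫⁻ t in Ici c, ENNReal.ofReal (G t) = ∫⁻ t in Ici c, ∫⁻ u in Ioi t, nnp u := by
      apply setLIntegral_congr_fun measurableSet_Ici
      intro t ht
      rw [hGdef]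
      exact ofReal_integral_eq_lintegral_ofReal hh.integrableOn
        ((ae_restrict_iff' measurableSet_Ioi).2
          (Eventually.of_forall fun u hu => hpos u (ht.trans hu.le)))
    rw [e1]
    -- Tonelli
    set S : Set (ℝ × ℝ) := {p : ℝ × ℝ | c ≤ p.1 ∧ p.1 < p.2} with hS
    have hSm : MeasurableSet S :=
      (measurableSet_le measurable_const measurable_fst).inter
        (measurableSet_lt measurable_fst measurable_snd)
    set bigF : ℝ → ℝ → ℝ≥0∞ := fun t u => S.indicator (fun p => nnp p.2) (t, u) with hbigF
    have hFm : AEMeasurable (Function.uncurry bigF) (volume.prod volume) := by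
      have : Function.uncurry bigF = S.indicator (fun p => nnp p.2) := by
        funext p; simp [Function.uncurry, hbigF]
      rw [this]
      exact ((hhm.ennreal_ofReal.comp measurable_snd).indicator hSm).aemeasurable
    have swap := lintegral_lintegral_swap hFm
    have e2 : ∫⁻ t, ∫⁻ u, bigF t u = ∫⁻ t in Ici c, ∫⁻ u in Ioi t, nnp u := by
      rw [← lintegral_indicator measurableSet_Ici]
      apply lintegral_congr
      intro t
      by_cases hct : c ≤ t
      · have : (fun u => bigF t u) = (Ioi t).indicator nnp := by
          funext u
          by_cases htu : t < u
          · simp [hbigF, hS, indicator_of_mem, htu, hct, Set.mem_Ioi.2 htu]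
          · simp [hbigF, hS, htu, indicator_of_notMem, fun hc => htu hc]
        rw [this, lintegral_indicator measurableSet_Ioi,
          indicator_of_mem (Set.mem_Ici.2 hct)]
      · have : (fun u => bigF t u) = fun _ => 0 := by
          funext u
          simp [hbigF, hS, indicator_of_notMem, hct]
        rw [this, lintegral_zero, indicator_of_notMem (by simpa using hct)]
    have e3 : ∫⁻ u, ∫⁻ t, bigF t u = ∫⁻ u in Ici c, ENNReal.ofReal (H u) := by
      rw [← lintegral_indicator measurableSet_Ici]
      apply lintegral_congr
      intro u
      have : (fun t => bigF t u) = (Ico c u).indicator (fun _ => nnp u) := by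
        funext t
        by_cases ht : c ≤ t ∧ t < u
        · simp [hbigF, hS, indicator_of_mem, ht, Set.mem_Ico.2 ht]
        · have h1 : t ∉ Ico c u := fun hc => ht ⟨hc.1, hc.2⟩
          have h2 : (t, u) ∉ S := fun hc => ht ⟨hc.1, hc.2⟩
          rw [Set.indicator_of_notMem h1, show bigF t u = 0 from Set.indicator_of_notMem h2 _]
      rw [this, lintegral_indicator measurableSet_Ico, setLIntegral_const,
        Real.volume_Ico]
      by_cases hcu : c ≤ u
      · rw [indicator_of_mem (Set.mem_Ici.2 hcu), hHdef]
        rw [← ENNReal.ofReal_mul (hpos u hcu)]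
      · rw [indicator_of_notMem (by simpa using hcu)]
        have : u - c ≤ 0 := by push_neg at hcu; linarith
        rw [ENNReal.ofReal_eq_zero.2 this, mul_zero]
    rw [← e2, swap, e3]
  -- Part B : over Iio c
  have hB : ENNReal.ofReal (∫ t in Iio c, G t) = ∫⁻ u in Iio c, ENNReal.ofReal (H u) := by
    rw [ofReal_integral_eq_lintegral_ofReal hG_int.integrableOn
      (Eventually.of_forall fun t => hGnn t)]
    have e1 : ∫⁻ t in Iio c, ENNReal.ofReal (G t) = ∫⁻ t in Iio c, ∫⁻ u in Iic t, nnm u := by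
      apply setLIntegral_congr_fun measurableSet_Iio
      intro t ht
      beta_reduce
      rw [show G t = ∫ u in Iic t, (-h u) from tail_eq_Iic hh htot t]
      exact ofReal_integral_eq_lintegral_ofReal hh.neg.integrableOn
        ((ae_restrict_iff' measurableSet_Iic).2
          (Eventually.of_forall fun u hu => neg_nonneg.2 (hneg u (hu.trans ht.le))))
    rw [e1]
    set S : Set (ℝ × ℝ) := {p : ℝ × ℝ | p.1 < c ∧ p.2 ≤ p.1} with hS
    have hSm : MeasurableSet S :=
      (measurableSet_lt measurable_fst measurable_const).inter
        (measurableSet_le measurable_snd measurable_fst)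
    set bigF : ℝ → ℝ → ℝ≥0∞ := fun t u => S.indicator (fun p => nnm p.2) (t, u) with hbigF
    have hFm : AEMeasurable (Function.uncurry bigF) (volume.prod volume) := by
      have : Function.uncurry bigF = S.indicator (fun p => nnm p.2) := by
        funext p; simp [Function.uncurry, hbigF]
      rw [this]
      exact (((hhm.neg.ennreal_ofReal).comp measurable_snd).indicator hSm).aemeasurable
    have swap := lintegral_lintegral_swap hFm
    have e2 : ∫⁻ t, ∫⁻ u, bigF t u = ∫⁻ t in Iio c, ∫⁻ u in Iic t, nnm u := by
      rw [← lintegral_indicator measurableSet_Iio]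
      apply lintegral_congr
      intro t
      by_cases hct : t < c
      · have : (fun u => bigF t u) = (Iic t).indicator nnm := by
          funext u
          by_cases htu : u ≤ t
          · simp [hbigF, hS, indicator_of_mem, htu, hct, Set.mem_Iic.2 htu]
          · simp [hbigF, hS, htu, indicator_of_notMem, fun hc => htu hc]
        rw [this, lintegral_indicator measurableSet_Iic,
          indicator_of_mem (Set.mem_Iio.2 hct)]
      · have : (fun u => bigF t u) = fun _ => 0 := by
          funext u
          simp [hbigF, hS, indicator_of_notMem, hct]
        rw [this, lintegral_zero, indicator_of_notMem (by simpa using hct)]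
    have e3 : ∫⁻ u, ∫⁻ t, bigF t u = ∫⁻ u in Iio c, ENNReal.ofReal (H u) := by
      rw [← lintegral_indicator measurableSet_Iio]
      apply lintegral_congr
      intro u
      have : (fun t => bigF t u) = (Ico u c).indicator (fun _ => nnm u) := by
        funext t
        by_cases ht : t < c ∧ u ≤ t
        · simp [hbigF, hS, indicator_of_mem, ht, Set.mem_Ico.2 ⟨ht.2, ht.1⟩]
        · have h1 : t ∉ Ico u c := fun hc => ht ⟨hc.2, hc.1⟩
          have h2 : (t, u) ∉ S := fun hc => ht ⟨hc.1, hc.2⟩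
          rw [Set.indicator_of_notMem h1, show bigF t u = 0 from Set.indicator_of_notMem h2 _]
      rw [this, lintegral_indicator measurableSet_Ico, setLIntegral_const,
        Real.volume_Ico]
      by_cases hcu : u < c
      · rw [indicator_of_mem (Set.mem_Iio.2 hcu), hHdef]
        rw [← ENNReal.ofReal_mul (neg_nonneg.2 (hneg u hcu.le))]
        congr 1
        ring
      · rw [indicator_of_notMem (by simpa using hcu)]
        have : c - u ≤ 0 := by push_neg at hcu; linarith
        rw [ENNReal.ofReal_eq_zero.2 this, mul_zero]
    rw [← e2, swap, e3]
  -- combine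
  have hsum : ENNReal.ofReal (∫ t, G t) = ENNReal.ofReal (∫ u, H u) := by
    have hGsplit : (∫ t, G t) = (∫ t in Ici c, G t) + ∫ t in Iio c, G t := by
      rw [← compl_Ici (a := c)]
      exact (integral_add_compl measurableSet_Ici hG_int).symm
    have hHofReal : ENNReal.ofReal (∫ u, H u)
        = (∫⁻ u in Ici c, ENNReal.ofReal (H u)) + ∫⁻ u in Iio c, ENNReal.ofReal (H u) := by
      rw [ofReal_integral_eq_lintegral_ofReal hH_int (Eventually.of_forall hHnn),
        ← compl_Ici (a := c), lintegral_add_compl _ measurableSet_Ici]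
    rw [hGsplit, ENNReal.ofReal_add (setIntegral_nonneg measurableSet_Ici fun t _ => hGnn t)
      (setIntegral_nonneg measurableSet_Iio fun t _ => hGnn t), hA, hB, hHofReal]
  have h1 : 0 ≤ ∫ t, G t := integral_nonneg hGnn
  have h2 : 0 ≤ ∫ u, H u := integral_nonneg hHnn
  exact (ENNReal.ofReal_eq_ofReal_iff h1 h2).1 hsum

end Aux

/-- **Yitzhaki's theorem, univariate case.** The simple-regression population
coefficient satisfies `Cov(Y,T)/Var(T) = ∫ m'(t) w(t) dt`, where
`w(t) = (∫_t^∞ (u - E[T]) f_T(u) du) / Var(T)`; moreover `∫ w(t) dt = 1` and `w(t) ≥ 0`. -/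
theorem stmt3 {Ω : Type*} [MeasurableSpace Ω] (μ : Measure Ω) [IsProbabilityMeasure μ]
    (Y T : Ω → ℝ)
    (hY : MemLp Y 2 μ) (hT : MemLp T 2 μ) (hTmeas : Measurable T)
    -- `T` has density `fT` with respect to Lebesgue measure
    (fT : ℝ → ℝ) (hfT_nonneg : ∀ t, 0 ≤ fT t) (hfT_meas : Measurable fT)
    (hfT : Measure.map T μ = volume.withDensity fun t => ENNReal.ofReal (fT t))
    (hmean_int : Integrable fun u => u * fT u)
    (hvarT : 0 < pvar μ T)
    -- the regression function `m(t) = E[Y | T = t]`, differentiable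
    (m : ℝ → ℝ) (hm_diff : Differentiable ℝ m)
    (hm : μ[Y | MeasurableSpace.comap T inferInstance] =ᵐ[μ] fun ω => m (T ω))
    -- Yitzhaki's weights
    (w : ℝ → ℝ)
    (hw : ∀ t, w t = (∫ u in Set.Ioi t, (u - ∫ ω, T ω ∂μ) * fT u) / pvar μ T)
    -- boundary conditions and finiteness of the displayed integrals
    (hbound_top :
      Tendsto (fun t => m t * ∫ u in Set.Ioi t, (u - ∫ ω, T ω ∂μ) * fT u) atTop (nhds 0))
    (hbound_bot :
      Tendsto (fun t => m t * ∫ u in Set.Ioi t, (u - ∫ ω, T ω ∂μ) * fT u) atBot (nhds 0))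
    (hint1 : Integrable fun t => deriv m t * w t)
    (hint2 : Integrable fun t => m t * ((t - ∫ ω, T ω ∂μ) * fT t))
    (hint3 : Integrable w) :
    pcov μ Y T / pvar μ T = ∫ t, deriv m t * w t
    ∧ (∫ t, w t) = 1
    ∧ ∀ t, 0 ≤ w t := by
  set c : ℝ := ∫ ω, T ω ∂μ with hc
  have hm_cont : Continuous m := hm_diff.continuous
  -- transfers of moments
  have hfT_int : Integrable fT := by
    have := (transfer_int hTmeas hfT_nonneg hfT_meas hfT
      (g := fun _ => (1:ℝ)) measurable_const).1 (integrable_const 1)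
    simpa using this
  have hfT_tot : (∫ u, fT u) = 1 := by
    have := transfer_eq hTmeas hfT_nonneg hfT_meas hfT
      (g := fun _ => (1:ℝ)) measurable_const
    simpa using this.symm
  have hETfT : c = ∫ u, u * fT u := by
    have := transfer_eq hTmeas hfT_nonneg hfT_meas hfT (g := fun u => u) measurable_id
    simpa [hc] using this
  have hT2_int : Integrable (fun ω => T ω * T ω) μ := by
    have h2 : MemLp (T • T) 1 μ := hT.smul hT
    exact memLp_one_iff_integrable.1 h2
  have hu2_meas : Measurable fun u : ℝ => u * u := measurable_id.mul measurable_id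
  have hu2fT_int : Integrable (fun u => u * u * fT u) :=
    (transfer_int hTmeas hfT_nonneg hfT_meas hfT hu2_meas).1 hT2_int
  have hET2 : (∫ ω, T ω * T ω ∂μ) = ∫ u, u * u * fT u :=
    transfer_eq hTmeas hfT_nonneg hfT_meas hfT hu2_meas
  -- the function h
  set h : ℝ → ℝ := fun u => (u - c) * fT u with hh_def
  have hh_meas : Measurable h := (measurable_id.sub measurable_const).mul hfT_meas
  have hh_split : h = fun u => u * fT u - c * fT u := funext fun u => by
    show (u - c) * fT u = u * fT u - c * fT u; ring
  have hh_int : Integrable h := by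
    rw [hh_split]; exact hmean_int.sub (hfT_int.const_mul c)
  have htot : (∫ u, h u) = 0 := by
    rw [hh_split, integral_sub hmean_int (hfT_int.const_mul c), integral_const_mul, hfT_tot,
      ← hETfT]
    ring
  have hpos : ∀ u, c ≤ u → 0 ≤ h u := fun u hcu =>
    mul_nonneg (by linarith) (hfT_nonneg u)
  have hneg : ∀ u, u ≤ c → h u ≤ 0 := fun u hcu =>
    mul_nonpos_iff.2 (Or.inr ⟨by linarith, hfT_nonneg u⟩)
  -- variance identity
  have hH_split : (fun u => h u * (u - c))
      = fun u => u * u * fT u - (2*c) * (u * fT u) + (c*c) * fT u := funext fun u => by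
    show (u - c) * fT u * (u - c) = _; ring
  have i1 : Integrable (fun u => u * u * fT u - (2*c) * (u * fT u)) :=
    hu2fT_int.sub (hmean_int.const_mul (2*c))
  have i2 : Integrable (fun u => (c*c) * fT u) := hfT_int.const_mul (c*c)
  have hH_int : Integrable (fun u => h u * (u - c)) := by
    rw [hH_split]
    exact i1.add i2
  have hvar_eq : pvar μ T = ∫ u, h u * (u - c) := by
    rw [hH_split, integral_add i1 i2, integral_sub hu2fT_int (hmean_int.const_mul (2*c)),
      integral_const_mul, integral_const_mul, hfT_tot, ← hETfT, ← hET2]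
    show (∫ ω, T ω * T ω ∂μ) - (∫ ω, T ω ∂μ) * (∫ ω, T ω ∂μ) = _
    rw [← hc, hET2]
    ring
  have hG_nonneg : ∀ t, 0 ≤ ∫ u in Set.Ioi t, h u := tail_nonneg hh_int htot hpos hneg
  -- Part 3
  have part3 : ∀ t, 0 ≤ w t := fun t => by
    rw [hw t]; exact div_nonneg (hG_nonneg t) hvarT.le
  -- G integrable
  have hwG : ∀ t, (∫ u in Set.Ioi t, h u) = pvar μ T * w t := by
    intro t
    rw [hw t, mul_div_cancel₀ _ (ne_of_gt hvarT)]
  have hG_int : Integrable (fun t => ∫ u in Set.Ioi t, h u) := by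
    have : (fun t => ∫ u in Set.Ioi t, h u) = fun t => pvar μ T * w t := funext hwG
    rw [this]
    exact hint3.const_mul _
  -- Part 2
  have hGtot : (∫ t, ∫ u in Set.Ioi t, h u) = pvar μ T := by
    rw [tail_total_integral hh_int hh_meas htot hpos hneg hG_int hH_int, ← hvar_eq]
  have part2 : (∫ t, w t) = 1 := by
    have e : (fun t => ∫ u in Set.Ioi t, h u) = fun t => pvar μ T * w t := funext hwG
    rw [e, integral_const_mul] at hGtot
    have hne : pvar μ T ≠ 0 := ne_of_gt hvarT
    field_simp at hGtot
    exact hGtot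
  -- Part 1 : conditional expectation step
  have hle : MeasurableSpace.comap T inferInstance ≤ _ := hTmeas.comap_le
  haveI : SigmaFinite (μ.trim hle) := inferInstance
  have hTsm : StronglyMeasurable[MeasurableSpace.comap T inferInstance] T :=
    (Measurable.stronglyMeasurable (measurable_iff_comap_le.2 le_rfl))
  have hTY_int : Integrable (fun ω => T ω * Y ω) μ := by
    have h2 : MemLp (T • Y) 1 μ := hY.smul hT
    exact memLp_one_iff_integrable.1 h2
  have hcond : μ[(fun ω => T ω * Y ω) | MeasurableSpace.comap T inferInstance]
      =ᵐ[μ] fun ω => T ω * m (T ω) := by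
    have h1 : μ[T * Y | MeasurableSpace.comap T inferInstance]
        =ᵐ[μ] T * μ[Y | MeasurableSpace.comap T inferInstance] :=
      condExp_mul_of_stronglyMeasurable_left hTsm hTY_int (hY.integrable one_le_two)
    refine h1.trans ?_
    filter_upwards [hm] with ω hω
    show T ω * (μ[Y | MeasurableSpace.comap T inferInstance]) ω = T ω * m (T ω)
    rw [hω]
  have hTmT_int : Integrable (fun ω => T ω * m (T ω)) μ := integrable_condExp.congr hcond
  have hmT_int : Integrable (fun ω => m (T ω)) μ := integrable_condExp.congr hm
  have hYT : (∫ ω, Y ω * T ω ∂μ) = ∫ ω, T ω * m (T ω) ∂μ := by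
    have e : (∫ ω, Y ω * T ω ∂μ) = ∫ ω, T ω * Y ω ∂μ :=
      integral_congr_ae (Eventually.of_forall fun ω => mul_comm _ _)
    rw [e, ← integral_condExp hle, integral_congr_ae hcond]
  have hY_eq : (∫ ω, Y ω ∂μ) = ∫ ω, m (T ω) ∂μ := by
    rw [← integral_condExp hle, integral_congr_ae hm]
  have hpcov : pcov μ Y T = ∫ ω, (T ω - c) * m (T ω) ∂μ := by
    have e : (fun ω => (T ω - c) * m (T ω))
        = fun ω => T ω * m (T ω) - c * m (T ω) := funext fun ω => by ring
    rw [e, integral_sub hTmT_int (hmT_int.const_mul c), integral_const_mul]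
    show (∫ ω, Y ω * T ω ∂μ) - (∫ ω, Y ω ∂μ) * (∫ ω, T ω ∂μ) = _
    rw [hYT, hY_eq, ← hc]
    ring
  have hg3 : Measurable fun u => (u - c) * m u :=
    (measurable_id.sub measurable_const).mul hm_cont.measurable
  have hpcov2 : pcov μ Y T = ∫ u, ((u - c) * m u) * fT u :=
    hpcov.trans (transfer_eq hTmeas hfT_nonneg hfT_meas hfT hg3)
  have hshape : (fun u => ((u - c) * m u) * fT u) = fun u => m u * h u := funext fun u => by
    show (u - c) * m u * fT u = m u * ((u - c) * fT u); ring
  -- apply the key lemma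
  have hint2' : Integrable (fun t => m t * h t) := hint2
  have hint1' : Integrable (fun t => deriv m t * ∫ u in Set.Ioi t, h u) := by
    have e : (fun t => deriv m t * ∫ u in Set.Ioi t, h u)
        = fun t => pvar μ T * (deriv m t * w t) := funext fun t => by
      rw [hwG t]; ring
    rw [e]
    exact hint1.const_mul _
  have hkey : (∫ t, deriv m t * ∫ u in Set.Ioi t, h u) = ∫ t, m t * h t :=
    yitzhaki_key hh_int hm_diff hG_nonneg hint1' hint2' hbound_top hbound_bot
  have part1 : pcov μ Y T / pvar μ T = ∫ t, deriv m t * w t := by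
    rw [hpcov2, hshape, ← hkey]
    have e : (fun t => deriv m t * ∫ u in Set.Ioi t, h u)
        = fun t => pvar μ T * (deriv m t * w t) := funext fun t => by
      rw [hwG t]; ring
    rw [e, integral_const_mul]
    exact mul_div_cancel_left₀ _ (ne_of_gt hvarT)
  exact ⟨part1, part2, part3⟩
end

section
/- For each x, the partial weight function integrates to the conditional variance: ∫_{-∞}^{∞} s(t, x) dt = Var(T | X = x), where s(t, x) := ∫_t^∞ (u − μ(x)) f_{T|X}(u|x) du. Consequently, if 0 < E_X[Var(T | X)] < ∞, the NRWE weights w(t, x) := s(t, x)/E_X[Var(T | X)] satisfy E_X[ ∫_{-∞}^{∞} w(t, X) dt ] = 1. -/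
open MeasureTheory Set
open scoped ENNReal

lemma swap_half (g : ℝ → ℝ) (hgm : Measurable g)
    (hug : Integrable fun u => u * g u) :
    ∫ t in Set.Ioi (0:ℝ), (∫ u in Set.Ioi t, g u) = ∫ u, g u * max u 0 := by
  set f : ℝ → ℝ → ℝ := fun t u => if t < u then g u else 0 with hf
  have hfm : Measurable (Function.uncurry f) := by
    exact Measurable.ite (measurableSet_lt measurable_fst measurable_snd) (hgm.comp measurable_snd) measurable_const
  have hint : Integrable (Function.uncurry f)
      ((volume.restrict (Set.Ioi (0:ℝ))).prod volume) := by
    refine ⟨hfm.aestronglyMeasurable, ?_⟩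
    rw [HasFiniteIntegral, lintegral_prod_symm _ hfm.enorm.aemeasurable]
    have hb : ∀ u : ℝ, (∫⁻ t in Set.Ioi (0:ℝ), ‖f t u‖₊) ≤ ‖u * g u‖₊ := by
      intro u
      have : ∀ t : ℝ, (‖f t u‖₊ : ℝ≥0∞) = Set.indicator (Set.Iio u) (fun _ => (‖g u‖₊ : ℝ≥0∞)) t := by
        intro t
        simp only [hf, Set.indicator_apply, Set.mem_Iio]
        split <;> simp
      calc (∫⁻ t in Set.Ioi (0:ℝ), ‖f t u‖₊)
          = ∫⁻ t in Set.Ioi (0:ℝ), Set.indicator (Set.Iio u) (fun _ => (‖g u‖₊ : ℝ≥0∞)) t := by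
            simp_rw [this]
        _ = (‖g u‖₊ : ℝ≥0∞) * volume (Set.Iio u ∩ Set.Ioi 0) := by
            rw [lintegral_indicator measurableSet_Iio, setLIntegral_const,
              Measure.restrict_apply measurableSet_Iio]
        _ ≤ (‖g u‖₊ : ℝ≥0∞) * ENNReal.ofReal |u| := by
            gcongr
            have : Set.Iio u ∩ Set.Ioi 0 = Set.Ioo 0 u := by
              ext y; simp [Set.mem_Ioo, and_comm]
            rw [this, Real.volume_Ioo]
            exact ENNReal.ofReal_le_ofReal (by simpa using le_abs_self u)
        _ = ‖u * g u‖₊ := by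
            rw [nnnorm_mul, ENNReal.coe_mul, ← Real.enorm_eq_ofReal_abs, enorm_eq_nnnorm, mul_comm]
    calc (∫⁻ u, ∫⁻ t, ‖Function.uncurry f (t, u)‖₊ ∂(volume.restrict (Set.Ioi (0:ℝ))))
        ≤ ∫⁻ u, (‖u * g u‖₊ : ℝ≥0∞) := lintegral_mono fun u => hb u
      _ < ⊤ := hug.2
  have hswap := integral_integral_swap hint
  have hL : ∫ t in Set.Ioi (0:ℝ), (∫ u, f t u) = ∫ t in Set.Ioi (0:ℝ), (∫ u in Set.Ioi t, g u) := by
    refine setIntegral_congr_fun measurableSet_Ioi fun t _ => ?_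
    have : ∀ u, f t u = Set.indicator (Set.Ioi t) g u := by
      intro u; simp [hf, Set.indicator_apply, Set.mem_Ioi]
    simp_rw [this]
    exact integral_indicator measurableSet_Ioi
  have hR : ∫ u, (∫ t in Set.Ioi (0:ℝ), f t u) = ∫ u, g u * max u 0 := by
    refine integral_congr_ae (ae_of_all _ fun u => ?_)
    have : ∀ t, f t u = Set.indicator (Set.Iio u) (fun _ => g u) t := by
      intro t; simp [hf, Set.indicator_apply, Set.mem_Iio]
    simp_rw [this]
    rw [setIntegral_indicator measurableSet_Iio, setIntegral_const]
    have : Set.Ioi (0:ℝ) ∩ Set.Iio u = Set.Ioo 0 u := rfl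
    rw [this, measureReal_def, Real.volume_Ioo, smul_eq_mul, mul_comm]
    congr 1
    rw [ENNReal.toReal_ofReal', sub_zero]
  rw [← hL, hswap, hR]

lemma swap_half2 (g : ℝ → ℝ) (hgm : Measurable g)
    (hug : Integrable fun u => u * g u) :
    ∫ t in Set.Iic (0:ℝ), (∫ u in Set.Iic t, g u) = ∫ u, g u * max (-u) 0 := by
  set f : ℝ → ℝ → ℝ := fun t u => if u ≤ t then g u else 0 with hf
  have hfm : Measurable (Function.uncurry f) := by
    exact Measurable.ite (measurableSet_le measurable_snd measurable_fst)
      (hgm.comp measurable_snd) measurable_const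
  have hint : Integrable (Function.uncurry f)
      ((volume.restrict (Set.Iic (0:ℝ))).prod volume) := by
    refine ⟨hfm.aestronglyMeasurable, ?_⟩
    rw [HasFiniteIntegral, lintegral_prod_symm _ hfm.enorm.aemeasurable]
    have hb : ∀ u : ℝ, (∫⁻ t in Set.Iic (0:ℝ), ‖f t u‖₊) ≤ ‖u * g u‖₊ := by
      intro u
      have h1 : ∀ t : ℝ, (‖f t u‖₊ : ℝ≥0∞) = Set.indicator (Set.Ici u) (fun _ => (‖g u‖₊ : ℝ≥0∞)) t := by
        intro t
        simp only [hf, Set.indicator_apply, Set.mem_Ici]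
        split <;> simp
      calc (∫⁻ t in Set.Iic (0:ℝ), ‖f t u‖₊)
          = ∫⁻ t in Set.Iic (0:ℝ), Set.indicator (Set.Ici u) (fun _ => (‖g u‖₊ : ℝ≥0∞)) t := by
            simp_rw [h1]
        _ = (‖g u‖₊ : ℝ≥0∞) * volume (Set.Ici u ∩ Set.Iic 0) := by
            rw [lintegral_indicator measurableSet_Ici, setLIntegral_const,
              Measure.restrict_apply measurableSet_Ici]
        _ ≤ (‖g u‖₊ : ℝ≥0∞) * ENNReal.ofReal |u| := by
            gcongr
            have h2 : Set.Ici u ∩ Set.Iic 0 = Set.Icc u 0 := rfl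
            rw [h2, Real.volume_Icc]
            exact ENNReal.ofReal_le_ofReal (by simpa using neg_le_abs u)
        _ = ‖u * g u‖₊ := by
            rw [nnnorm_mul, ENNReal.coe_mul, ← Real.enorm_eq_ofReal_abs, enorm_eq_nnnorm, mul_comm]
    calc (∫⁻ u, ∫⁻ t, ‖Function.uncurry f (t, u)‖₊ ∂(volume.restrict (Set.Iic (0:ℝ))))
        ≤ ∫⁻ u, (‖u * g u‖₊ : ℝ≥0∞) := lintegral_mono fun u => hb u
      _ < ⊤ := hug.2
  have hswap := integral_integral_swap hint
  have hL : ∫ t in Set.Iic (0:ℝ), (∫ u, f t u) = ∫ t in Set.Iic (0:ℝ), (∫ u in Set.Iic t, g u) := by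
    refine setIntegral_congr_fun measurableSet_Iic fun t _ => ?_
    have h3 : ∀ u, f t u = Set.indicator (Set.Iic t) g u := by
      intro u; simp [hf, Set.indicator_apply, Set.mem_Iic]
    simp_rw [h3]
    exact integral_indicator measurableSet_Iic
  have hR : ∫ u, (∫ t in Set.Iic (0:ℝ), f t u) = ∫ u, g u * max (-u) 0 := by
    refine integral_congr_ae (ae_of_all _ fun u => ?_)
    have h4 : ∀ t, f t u = Set.indicator (Set.Ici u) (fun _ => g u) t := by
      intro t; simp [hf, Set.indicator_apply, Set.mem_Ici]
    simp_rw [h4]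
    rw [setIntegral_indicator measurableSet_Ici, setIntegral_const]
    have h5 : Set.Iic (0:ℝ) ∩ Set.Ici u = Set.Icc u 0 := by
      ext y; simp [Set.mem_Icc, and_comm]
    rw [h5, measureReal_def, Real.volume_Icc, smul_eq_mul, mul_comm]
    congr 1
    rw [ENNReal.toReal_ofReal', zero_sub]
  rw [← hL, hswap, hR]

lemma key_integral (g : ℝ → ℝ) (hgm : Measurable g) (hg : Integrable g)
    (hug : Integrable fun u => u * g u) (hg0 : ∫ u, g u = 0)
    (hF : Integrable fun t => ∫ u in Set.Ioi t, g u) :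
    ∫ t, (∫ u in Set.Ioi t, g u) = ∫ u, u * g u := by
  have habs : ∀ u : ℝ, |max u 0| ≤ |u| := by
    intro u
    rcases le_total u 0 with h | h
    · simp [max_eq_right h]
    · simp [max_eq_left h]
  have hmax : Integrable fun u => g u * max u 0 := by
    refine hug.mono ((hgm.mul (measurable_id.max measurable_const)).aestronglyMeasurable)
      (ae_of_all _ fun u => ?_)
    calc ‖g u * max u 0‖ = |g u| * |max u 0| := abs_mul _ _
      _ ≤ |g u| * |u| := mul_le_mul_of_nonneg_left (habs u) (abs_nonneg _)
      _ = ‖u * g u‖ := by rw [Real.norm_eq_abs, abs_mul, mul_comm]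
  have hmin : Integrable fun u => g u * max (-u) 0 := by
    refine hug.mono ((hgm.mul (measurable_id.neg.max measurable_const)).aestronglyMeasurable)
      (ae_of_all _ fun u => ?_)
    calc ‖g u * max (-u) 0‖ = |g u| * |max (-u) 0| := abs_mul _ _
      _ ≤ |g u| * |u| := mul_le_mul_of_nonneg_left (by simpa using habs (-u)) (abs_nonneg _)
      _ = ‖u * g u‖ := by rw [Real.norm_eq_abs, abs_mul, mul_comm]
  have hneg : ∀ t, (∫ u in Set.Ioi t, g u) = -∫ u in Set.Iic t, g u := by
    intro t
    have h := intervalIntegral.integral_Iic_add_Ioi (b := t) hg.integrableOn hg.integrableOn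
    rw [hg0] at h; linarith
  have hIic : ∫ t in Set.Iic (0:ℝ), (∫ u in Set.Ioi t, g u)
      = -∫ u, g u * max (-u) 0 := by
    have : ∫ t in Set.Iic (0:ℝ), (∫ u in Set.Ioi t, g u)
        = ∫ t in Set.Iic (0:ℝ), -(∫ u in Set.Iic t, g u) := by
      refine setIntegral_congr_fun measurableSet_Iic fun t _ => hneg t
    rw [this, integral_neg, swap_half2 g hgm hug]
  have hIoi := swap_half g hgm hug
  have hsplit := intervalIntegral.integral_Iic_add_Ioi (b := (0:ℝ)) hF.integrableOn hF.integrableOn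
  rw [← hsplit, hIic, hIoi, neg_add_eq_sub, ← integral_sub hmax hmin]
  refine integral_congr_ae (ae_of_all _ fun u => ?_)
  have huu : max u 0 - max (-u) 0 = u := by
    rcases le_total u 0 with h | h
    · rw [max_eq_right h, max_eq_left (by linarith)]; ring
    · rw [max_eq_left h, max_eq_right (by linarith : -u ≤ (0:ℝ))]; ring
  calc g u * max u 0 - g u * max (-u) 0 = g u * (max u 0 - max (-u) 0) := by ring
    _ = u * g u := by rw [huu]; ring

/-- For each `x`, the partial weight function integrates to the conditional
variance: `∫ s(t,x) dt = Var(T | X = x)` with `s(t,x) = ∫_t^∞ (u - μ(x)) f_{T|X}(u|x) du`.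
Consequently, if `0 < E_X[Var(T|X)] < ∞`, the NRWE weights `w(t,x) = s(t,x)/E_X[Var(T|X)]`
satisfy `E_X[∫ w(t,X) dt] = 1`. -/
theorem stmt5 {Ω : Type*} [MeasurableSpace Ω] (μ : Measure Ω) [IsProbabilityMeasure μ]
    {d : ℕ} (T : Ω → ℝ) (X : Ω → Fin d → ℝ)
    (hT : MemLp T 2 μ) (hTmeas : Measurable T) (hXmeas : Measurable X)
    -- `fTX (· | x)` is the conditional density of `T` given `X = x`
    (fTX : ℝ → (Fin d → ℝ) → ℝ)
    (hf_nonneg : ∀ u x, 0 ≤ fTX u x)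
    (hf_meas : ∀ x, Measurable fun u => fTX u x)
    (hf_L1 : ∀ x, Integrable fun u => fTX u x)
    (hf_one : ∀ x, ∫ u, fTX u x = 1)
    (hf_mean_int : ∀ x, Integrable fun u => u * fTX u x)
    -- conditional mean and conditional variance of `T` given `X = x`, assumed finite
    (μx : (Fin d → ℝ) → ℝ) (hμx : ∀ x, μx x = ∫ u, u * fTX u x)
    (varx : (Fin d → ℝ) → ℝ) (hvarx : ∀ x, varx x = ∫ u, (u - μx x) ^ 2 * fTX u x)
    (hvarx_int : ∀ x, Integrable fun u => (u - μx x) ^ 2 * fTX u x)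
    -- the partial weight function `s`
    (s : ℝ → (Fin d → ℝ) → ℝ)
    (hs : ∀ t x, s t x = ∫ u in Set.Ioi t, (u - μx x) * fTX u x)
    (hs_int : ∀ x, Integrable fun t => s t x)
    -- `0 < E_X[Var(T|X)] < ∞` and the NRWE weights
    (EVar : ℝ) (hEVar : EVar = ∫ ω, varx (X ω) ∂μ)
    (hEVarInt : Integrable (fun ω => varx (X ω)) μ)
    (hEVarpos : 0 < EVar)
    (w : ℝ → (Fin d → ℝ) → ℝ)
    (hw : ∀ t x, w t x = s t x / EVar) :
    (∀ x, ∫ t, s t x = varx x)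
    ∧ ∫ ω, (∫ t, w t (X ω)) ∂μ = 1 := by
  have part1 : ∀ x, ∫ t, s t x = varx x := by
    intro x
    set g : ℝ → ℝ := fun u => (u - μx x) * fTX u x with hgdef
    have hgm : Measurable g := ((measurable_id.sub_const _).mul (hf_meas x))
    have hgeq : g = fun u => u * fTX u x - μx x * fTX u x := by
      funext u; simp only [hgdef]; ring
    have hg : Integrable g := by
      rw [hgeq]; exact (hf_mean_int x).sub ((hf_L1 x).const_mul _)
    have hg0 : ∫ u, g u = 0 := by
      rw [hgeq, integral_sub (hf_mean_int x) ((hf_L1 x).const_mul _),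
        integral_const_mul, hf_one, ← hμx]
      ring
    have hugeq : (fun u => u * g u)
        = fun u => (u - μx x) ^ 2 * fTX u x + μx x * ((u - μx x) * fTX u x) := by
      funext u; simp only [hgdef]; ring
    have hug : Integrable fun u => u * g u := by
      rw [hugeq]; exact (hvarx_int x).add (hg.const_mul _)
    have hugval : ∫ u, u * g u = varx x := by
      rw [hugeq, integral_add (hvarx_int x) (hg.const_mul _), integral_const_mul,
        hg0, hvarx]
      ring
    have hseq : (fun t => s t x) = fun t => ∫ u in Set.Ioi t, g u := funext fun t => hs t x
    have hF : Integrable fun t => ∫ u in Set.Ioi t, g u := by rw [← hseq]; exact hs_int x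
    calc ∫ t, s t x = ∫ t, (∫ u in Set.Ioi t, g u) := by rw [← hseq]
      _ = ∫ u, u * g u := key_integral g hgm hg hug hg0 hF
      _ = varx x := hugval
  refine ⟨part1, ?_⟩
  have h1 : ∀ x, ∫ t, w t x = varx x / EVar := by
    intro x
    simp_rw [hw]
    rw [integral_div, part1 x]
  simp_rw [h1]
  rw [integral_div, ← hEVar, div_self hEVarpos.ne']
end

section
/- If the conditional expectation of T given X is linear, i.e., μ(X) = Xᵀπ₀ almost surely for some π₀ ∈ ℝ^d, then the population linear-projection coefficient π equals π₀, the misspecification error Δ(X) is identically zero, and the population regression coefficient on T equals the Naive Regression-Weighted Effect: β = E_X[ ∫_{-∞}^{∞} ∂_t m(t, X) · w(t, X) dt ] with w(t, x) := s(t, x)/E_X[Var(T | X)]. -/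
open MeasureTheory Filter

namespace S9

open MeasureTheory Filter Set


variable {g : ℝ → ℝ} {μ0 : ℝ}

/-- split: `∫_{Ioi t1} = ∫_{Ioc t1 t2} + ∫_{Ioi t2}` -/
lemma s_split (hg : Integrable g) {t1 t2 : ℝ} (h : t1 ≤ t2) :
    ∫ u in Ioi t1, g u = (∫ u in Ioc t1 t2, g u) + ∫ u in Ioi t2, g u := by
  rw [← setIntegral_union (Set.Ioc_disjoint_Ioi le_rfl) measurableSet_Ioi
    (hg.integrableOn) (hg.integrableOn), Set.Ioc_union_Ioi_eq_Ioi h]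

lemma s_total (hg : Integrable g) (t : ℝ) :
    (∫ u in Iic t, g u) + ∫ u in Ioi t, g u = ∫ u, g u := by
  rw [← setIntegral_union (Set.Iic_disjoint_Ioi le_rfl) measurableSet_Ioi
    (hg.integrableOn) (hg.integrableOn), Set.Iic_union_Ioi, setIntegral_univ]

lemma s_nonneg (hg : Integrable g) (hneg : ∀ u, u ≤ μ0 → g u ≤ 0)
    (hpos : ∀ u, μ0 ≤ u → 0 ≤ g u) (htot : ∫ u, g u = 0) (t : ℝ) :
    0 ≤ ∫ u in Ioi t, g u := by
  rcases le_total μ0 t with h | h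
  · exact setIntegral_nonneg measurableSet_Ioi fun u hu => hpos u (h.trans hu.le)
  · have h1 : (∫ u in Iic t, g u) ≤ 0 :=
      setIntegral_nonpos measurableSet_Iic fun u hu => hneg u (hu.trans h)
    have := s_total hg t
    linarith

lemma s_mono_le (hg : Integrable g) (hneg : ∀ u, u ≤ μ0 → g u ≤ 0)
    {t1 t2 : ℝ} (h12 : t1 ≤ t2) (h2 : t2 ≤ μ0) :
    (∫ u in Ioi t1, g u) ≤ ∫ u in Ioi t2, g u := by
  have h1 : (∫ u in Ioc t1 t2, g u) ≤ 0 :=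
    setIntegral_nonpos measurableSet_Ioc fun u hu => hneg u (hu.2.trans h2)
  have := s_split hg h12 (t2 := t2)
  linarith

lemma s_mono_ge (hg : Integrable g) (hpos : ∀ u, μ0 ≤ u → 0 ≤ g u)
    {t1 t2 : ℝ} (h1 : μ0 ≤ t1) (h12 : t1 ≤ t2) :
    (∫ u in Ioi t2, g u) ≤ ∫ u in Ioi t1, g u := by
  have hge : 0 ≤ ∫ u in Ioc t1 t2, g u :=
    setIntegral_nonneg measurableSet_Ioc fun u hu => hpos u (h1.trans hu.1.le)
  have := s_split hg h12 (t2 := t2)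
  linarith

lemma s_continuous (hg : Integrable g) : Continuous (fun t => ∫ u in Ioi t, g u) := by
  have key : ∀ t : ℝ, (∫ u in Ioi t, g u) =
      (∫ u in Ioi (0:ℝ), g u) - ∫ u in (0:ℝ)..t, g u := by
    intro t
    rcases le_total 0 t with h | h
    · rw [intervalIntegral.integral_of_le h, s_split hg h (t2 := t)]
      ring
    · rw [intervalIntegral.integral_symm, intervalIntegral.integral_of_le h,
        s_split hg h (t2 := 0)]
      ring
  have : (fun t => ∫ u in Ioi t, g u) =
      fun t => (∫ u in Ioi (0:ℝ), g u) - ∫ u in (0:ℝ)..t, g u := funext key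
  rw [this]
  exact continuous_const.sub (intervalIntegral.continuous_primitive
    (fun a b => hg.intervalIntegrable) 0)

lemma vanish_above (hg : Integrable g) (hpos : ∀ u, μ0 ≤ u → 0 ≤ g u)
    {b : ℝ} (hb : μ0 ≤ b) (h0 : (∫ u in Ioi b, g u) = 0) :
    ∀ᵐ u, u ∈ Ioi b → g u = 0 := by
  have hnn : 0 ≤ᵐ[volume.restrict (Ioi b)] g :=
    (ae_restrict_iff' measurableSet_Ioi).2
      (ae_of_all _ fun u hu => hpos u (hb.trans (le_of_lt hu)))
  have := (integral_eq_zero_iff_of_nonneg_ae hnn hg.restrict).1 h0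
  exact (ae_restrict_iff' measurableSet_Ioi).1 this

lemma vanish_below (hg : Integrable g) (hneg : ∀ u, u ≤ μ0 → g u ≤ 0)
    (htot : ∫ u, g u = 0)
    {a : ℝ} (ha : a ≤ μ0) (h0 : (∫ u in Ioi a, g u) = 0) :
    ∀ᵐ u, u ∈ Iic a → g u = 0 := by
  have hIic : (∫ u in Iic a, (-g) u) = 0 := by
    have := s_total hg a
    have e : (∫ u in Iic a, (-g) u) = -∫ u in Iic a, g u := integral_neg g
    rw [e]; linarith
  have hnn : 0 ≤ᵐ[volume.restrict (Iic a)] (-g) :=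
    (ae_restrict_iff' measurableSet_Iic).2
      (ae_of_all _ fun u hu => neg_nonneg.2 (hneg u (hu.trans ha)))
  have := (integral_eq_zero_iff_of_nonneg_ae hnn hg.neg.restrict).1 hIic
  have h2 := (ae_restrict_iff' measurableSet_Iic).1 this
  filter_upwards [h2] with u hu hmem
  have := hu hmem
  simpa [Pi.neg_apply, neg_eq_zero] using this


lemma g_ae_zero_off (hg : Integrable g) (hneg : ∀ u, u ≤ μ0 → g u ≤ 0)
    (hpos : ∀ u, μ0 ≤ u → 0 ≤ g u) (htot : ∫ u, g u = 0) :
    ∀ᵐ u, (¬ 0 < ∫ v in Ioi u, g v) → g u = 0 := by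
  have hsc : Continuous (fun t => ∫ v in Ioi t, g v) := s_continuous hg
  have hs0 : ∀ t, 0 ≤ ∫ v in Ioi t, g v := s_nonneg hg hneg hpos htot
  set I : Set ℝ := {t | 0 < ∫ v in Ioi t, g v} with hI
  have hIconn : ∀ {t1 t t2 : ℝ}, t1 ∈ I → t2 ∈ I → t1 ≤ t → t ≤ t2 → t ∈ I := by
    intro t1 t t2 h1 h2 h12 h22
    rcases le_total t μ0 with h | h
    · exact lt_of_lt_of_le h1 (s_mono_le hg hneg h12 h)
    · exact lt_of_lt_of_le h2 (s_mono_ge hg hpos h h22)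
  have hIopen : IsOpen I := isOpen_lt continuous_const hsc
  by_cases hne : I.Nonempty
  · obtain ⟨c, hc⟩ := hne
    have upper : ∀ᵐ u, (u ∉ I ∧ c < u) → g u = 0 := by
      by_cases hbdd : BddAbove I
      · set b := sSup I with hb
        have hcb : c ≤ b := le_csSup hbdd hc
        have hbI : b ∉ I := by
          intro hbmem
          obtain ⟨ε, hε, hball⟩ := Metric.isOpen_iff.1 hIopen b hbmem
          have hmem : b + ε/2 ∈ I := by
            apply hball
            simp only [Metric.mem_ball, Real.dist_eq]
            rw [abs_of_nonneg (by linarith)]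
            · linarith
          have := le_csSup hbdd hmem; linarith
        have hsb : (∫ v in Ioi b, g v) = 0 := le_antisymm (not_lt.1 hbI) (hs0 b)
        have hμb : μ0 ≤ b := by
          by_contra hcon; push_neg at hcon
          have hcμ : c ≤ μ0 := hcb.trans hcon.le
          have : μ0 ∈ I := lt_of_lt_of_le hc (s_mono_le hg hneg hcμ le_rfl)
          exact absurd (le_csSup hbdd this) (not_le.2 hcon)
        have hv := vanish_above hg hpos hμb hsb
        have hbne : ∀ᵐ u : ℝ, u ≠ b := by
          refine ae_iff.2 ?_
          have : {u : ℝ | ¬ u ≠ b} = {b} := by ext u; simp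
          rw [this]; exact measure_singleton b
        filter_upwards [hv, hbne] with u h1 h2 hu
        obtain ⟨huI, hcu⟩ := hu
        apply h1
        rcases lt_or_ge b u with h | h
        · exact h
        · exfalso
          have hub : u < b := lt_of_le_of_ne h h2
          obtain ⟨y, hyI, huy⟩ := exists_lt_of_lt_csSup ⟨c, hc⟩ hub
          exact huI (hIconn hc hyI hcu.le huy.le)
      · refine ae_of_all _ ?_
        rintro u ⟨huI, hcu⟩
        exfalso
        obtain ⟨y, hyI, hy⟩ := not_bddAbove_iff.1 hbdd u
        exact huI (hIconn hc hyI hcu.le hy.le)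
    have lower : ∀ᵐ u, (u ∉ I ∧ u < c) → g u = 0 := by
      by_cases hbdd : BddBelow I
      · set a := sInf I with ha
        have hca : a ≤ c := csInf_le hbdd hc
        have haI : a ∉ I := by
          intro hamem
          obtain ⟨ε, hε, hball⟩ := Metric.isOpen_iff.1 hIopen a hamem
          have hmem : a - ε/2 ∈ I := by
            apply hball
            simp only [Metric.mem_ball, Real.dist_eq]
            rw [abs_of_nonpos (by linarith)]
            · linarith
          have := csInf_le hbdd hmem; linarith
        have hsa : (∫ v in Ioi a, g v) = 0 := le_antisymm (not_lt.1 haI) (hs0 a)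
        have hμa : a ≤ μ0 := by
          by_contra hcon; push_neg at hcon
          have hcμ : μ0 ≤ c := hcon.le.trans hca
          have : μ0 ∈ I := lt_of_lt_of_le hc (s_mono_ge hg hpos le_rfl hcμ)
          exact absurd (csInf_le hbdd this) (not_le.2 hcon)
        have hv := vanish_below hg hneg htot hμa hsa
        filter_upwards [hv] with u h1 hu
        obtain ⟨huI, huc⟩ := hu
        apply h1
        rcases le_or_gt u a with h | h
        · exact h
        · exfalso
          obtain ⟨y, hyI, huy⟩ := exists_lt_of_csInf_lt ⟨c, hc⟩ h
          exact huI (hIconn hyI hc huy.le huc.le)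
      · refine ae_of_all _ ?_
        rintro u ⟨huI, huc⟩
        exfalso
        obtain ⟨y, hyI, hy⟩ := not_bddBelow_iff.1 hbdd u
        exact huI (hIconn hyI hc hy.le huc.le)
    filter_upwards [upper, lower] with u hu hl huI
    rcases lt_trichotomy u c with h | h | h
    · exact hl ⟨huI, h⟩
    · exact absurd (h ▸ hc) huI
    · exact hu ⟨huI, h⟩
  · have hsμ : (∫ v in Ioi μ0, g v) = 0 := by
      have : μ0 ∉ I := fun h => hne ⟨μ0, h⟩
      exact le_antisymm (not_lt.1 this) (hs0 μ0)
    have h1 := vanish_above hg hpos le_rfl hsμ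
    have h2 := vanish_below hg hneg htot le_rfl hsμ
    filter_upwards [h1, h2] with u hu1 hu2 _
    rcases le_or_gt u μ0 with h | h
    · exact hu2 h
    · exact hu1 h

lemma interval_ibp (hg : Integrable g) {m : ℝ → ℝ} (hm : Differentiable ℝ m)
    (h1 : Integrable (fun t => deriv m t * ∫ u in Ioi t, g u))
    (h2 : Integrable (fun t => m t * g t))
    {α β : ℝ} (hαβ : α ≤ β)
    {c : ℝ} (hc : 0 < c) (hlb : ∀ t ∈ Icc α β, c ≤ ∫ u in Ioi t, g u) :
    ∫ t in Ioc α β, deriv m t * ∫ u in Ioi t, g u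
      = (∫ t in Ioc α β, m t * g t) + m β * (∫ u in Ioi β, g u)
        - m α * (∫ u in Ioi α, g u) := by
  set d : ℝ → ℝ := deriv m with hd
  -- integrability of the derivative on `Ioc α β`
  have hd_int : IntegrableOn d (Ioc α β) := by
    refine Integrable.mono' (((h1.abs.const_mul c⁻¹)).restrict)
      ((measurable_deriv m).aestronglyMeasurable.restrict) ?_
    refine (ae_restrict_iff' measurableSet_Ioc).2 (ae_of_all _ fun t ht => ?_)
    have hst : c ≤ ∫ u in Ioi t, g u := hlb t (Ioc_subset_Icc_self ht)
    have h0 : (0:ℝ) < ∫ u in Ioi t, g u := lt_of_lt_of_le hc hst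
    rw [Real.norm_eq_abs, abs_mul, abs_of_pos h0]
    have h3 : |d t| * c ≤ |d t| * ∫ u in Ioi t, g u :=
      mul_le_mul_of_nonneg_left hst (abs_nonneg _)
    calc |d t| = c⁻¹ * (|d t| * c) := by field_simp
    _ ≤ c⁻¹ * (|d t| * ∫ u in Ioi t, g u) := by
        exact mul_le_mul_of_nonneg_left h3 (by positivity)
  have hd_ii : IntervalIntegrable d volume α β :=
    (intervalIntegrable_iff_integrableOn_Ioc_of_le hαβ).2 hd_int
  -- FTC on subintervals
  have hftc : ∀ u ∈ Icc α β, ∫ t in α..u, d t = m u - m α := by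
    intro u hu
    refine intervalIntegral.integral_deriv_eq_sub (fun x _ => hm x) ?_
    refine hd_ii.mono_set ?_
    rw [uIcc_of_le hu.1, uIcc_of_le hαβ]
    exact Icc_subset_Icc le_rfl hu.2
  have hftcβ : ∫ t in Ioc α β, d t = m β - m α := by
    have := hftc β ⟨hαβ, le_rfl⟩
    rwa [intervalIntegral.integral_of_le hαβ] at this
  -- step 1 : split off the constant part `∫ u in Ioi β, g u`
  have hint2 : IntegrableOn (fun t => d t * ∫ u in Ioc t β, g u) (Ioc α β) := by
    refine ((h1.restrict).sub (hd_int.mul_const (∫ u in Ioi β, g u))).congr ?_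
    refine (ae_restrict_iff' measurableSet_Ioc).2 (ae_of_all _ fun t ht => ?_)
    simp only [Pi.sub_apply]
    rw [s_split hg ht.2 (t2 := β)]; ring
  have step1 : (∫ t in Ioc α β, d t * ∫ u in Ioi t, g u)
      = (m β - m α) * (∫ u in Ioi β, g u)
        + ∫ t in Ioc α β, d t * ∫ u in Ioc t β, g u := by
    have e1 : (∫ t in Ioc α β, d t * ∫ u in Ioi t, g u)
        = ∫ t in Ioc α β,
            (d t * (∫ u in Ioi β, g u) + d t * ∫ u in Ioc t β, g u) := by
      refine setIntegral_congr_fun measurableSet_Ioc fun t ht => ?_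
      rw [s_split hg ht.2 (t2 := β)]; ring
    rw [e1, integral_add (hd_int.mul_const _) hint2, ← hftcβ, ← integral_mul_const]
  -- step 2 : Fubini on the double integral
  set F : ℝ × ℝ → ℝ := fun p => if p.1 < p.2 then d p.1 * g p.2 else 0 with hF
  have hFint : Integrable F ((volume.restrict (Ioc α β)).prod (volume.restrict (Ioc α β))) := by
    have hprod : Integrable (fun p : ℝ × ℝ => d p.1 * g p.2)
        ((volume.restrict (Ioc α β)).prod (volume.restrict (Ioc α β))) :=
      Integrable.mul_prod hd_int (hg.restrict)
    have hmeas : MeasurableSet {p : ℝ × ℝ | p.1 < p.2} :=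
      measurableSet_lt measurable_fst measurable_snd
    refine (hprod.indicator hmeas).congr (ae_of_all _ fun p => ?_)
    by_cases h : p.1 < p.2 <;> simp [hF, Set.indicator_apply, h]
  have hswap : ∫ t in Ioc α β, ∫ u in Ioc α β, F (t, u)
      = ∫ u in Ioc α β, ∫ t in Ioc α β, F (t, u) :=
    integral_integral_swap hFint
  have inner_t : ∀ t ∈ Ioc α β,
      (∫ u in Ioc α β, F (t, u)) = d t * ∫ u in Ioc t β, g u := by
    intro t ht
    have hFe : ∀ u, F (t, u) = d t * (Ioi t).indicator g u := by
      intro u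
      by_cases h : t < u <;> simp [hF, Set.indicator_apply, h, Set.mem_Ioi]
    simp_rw [hFe]
    rw [integral_const_mul]
    congr 1
    rw [integral_indicator measurableSet_Ioi, Measure.restrict_restrict measurableSet_Ioi]
    have he : Ioi t ∩ Ioc α β = Ioc t β := by
      ext u; simp only [mem_inter_iff, mem_Ioi, mem_Ioc]
      constructor
      · rintro ⟨ha, _, hb⟩; exact ⟨ha, hb⟩
      · rintro ⟨ha, hb⟩; exact ⟨ha, ht.1.trans ha, hb⟩
    rw [he]
  have inner_u : ∀ u ∈ Ioc α β,
      (∫ t in Ioc α β, F (t, u)) = (m u - m α) * g u := by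
    intro u hu
    have hFe : ∀ t, F (t, u) = (Iio u).indicator (fun t => d t * g u) t := by
      intro t
      by_cases h : t < u <;> simp [hF, Set.indicator_apply, h, Set.mem_Iio]
    simp_rw [hFe]
    rw [integral_indicator measurableSet_Iio, Measure.restrict_restrict measurableSet_Iio]
    have he : Iio u ∩ Ioc α β = Ioo α u := by
      ext t; simp only [mem_inter_iff, mem_Iio, mem_Ioc, mem_Ioo]
      constructor
      · rintro ⟨ha, hb, _⟩; exact ⟨hb, ha⟩
      · rintro ⟨ha, hb⟩; exact ⟨hb, ha, (le_of_lt hb).trans hu.2⟩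
    rw [he, integral_mul_const, ← integral_Ioc_eq_integral_Ioo]
    congr 1
    have := hftc u ⟨hu.1.le, hu.2⟩
    rwa [intervalIntegral.integral_of_le hu.1.le] at this
  -- put the pieces together
  have step2 : (∫ t in Ioc α β, d t * ∫ u in Ioc t β, g u)
      = ∫ u in Ioc α β, (m u - m α) * g u := by
    rw [← setIntegral_congr_fun measurableSet_Ioc inner_t, hswap,
      setIntegral_congr_fun measurableSet_Ioc inner_u]
  have step3 : (∫ u in Ioc α β, (m u - m α) * g u)
      = (∫ u in Ioc α β, m u * g u) - m α * ∫ u in Ioc α β, g u := by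
    have e1 : ∀ u, (m u - m α) * g u = m u * g u - m α * g u := fun u => by ring
    simp_rw [e1]
    rw [integral_sub (h2.restrict) ((hg.restrict).const_mul (m α)), integral_const_mul]
  have hsαβ : (∫ u in Ioc α β, g u)
      = (∫ u in Ioi α, g u) - ∫ u in Ioi β, g u := by
    rw [s_split hg hαβ (t2 := β)]; ring
  rw [step1, step2, step3, hsαβ]
  ring


lemma ibp_main (hg : Integrable g) (hneg : ∀ u, u ≤ μ0 → g u ≤ 0)
    (hpos : ∀ u, μ0 ≤ u → 0 ≤ g u) (htot : ∫ u, g u = 0)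
    {m : ℝ → ℝ} (hm : Differentiable ℝ m)
    (htop : Tendsto (fun t => m t * ∫ u in Ioi t, g u) atTop (nhds 0))
    (hbot : Tendsto (fun t => m t * ∫ u in Ioi t, g u) atBot (nhds 0))
    (h1 : Integrable (fun t => deriv m t * ∫ u in Ioi t, g u))
    (h2 : Integrable (fun t => m t * g t)) :
    (∫ t, deriv m t * ∫ u in Ioi t, g u) = ∫ t, m t * g t := by
  have hsc : Continuous (fun t => ∫ v in Ioi t, g v) := s_continuous hg
  have hs0 : ∀ t, 0 ≤ ∫ v in Ioi t, g v := s_nonneg hg hneg hpos htot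
  have hoff := g_ae_zero_off hg hneg hpos htot
  set I : Set ℝ := {t | 0 < ∫ v in Ioi t, g v} with hI
  have hIconn : ∀ {t1 t t2 : ℝ}, t1 ∈ I → t2 ∈ I → t1 ≤ t → t ≤ t2 → t ∈ I := by
    intro t1 t t2 ha hb h12 h22
    rcases le_total t μ0 with h | h
    · exact lt_of_lt_of_le ha (s_mono_le hg hneg h12 h)
    · exact lt_of_lt_of_le hb (s_mono_ge hg hpos h h22)
  have hIopen : IsOpen I := isOpen_lt continuous_const hsc
  have hs_zero : ∀ t, t ∉ I → (∫ v in Ioi t, g v) = 0 := fun t ht =>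
    le_antisymm (not_lt.1 ht) (hs0 t)
  by_cases hne : I.Nonempty
  swap
  · -- `s ≡ 0` : both sides vanish
    have hLHS : (∫ t, deriv m t * ∫ u in Ioi t, g u) = 0 := by
      have : ∀ t, deriv m t * (∫ u in Ioi t, g u) = 0 := fun t => by
        rw [hs_zero t (fun h => hne ⟨t, h⟩), mul_zero]
      simp only [this, integral_zero]
    have hRHS : (∫ t, m t * g t) = 0 := by
      have hz : (fun t => m t * g t) =ᵐ[volume] (fun _ => (0:ℝ)) := by
        filter_upwards [hoff] with t ht
        rw [ht (fun h => hne ⟨t, h⟩), mul_zero]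
      rw [integral_congr_ae hz, integral_zero]
    rw [hLHS, hRHS]
  · obtain ⟨c, hc⟩ := hne
    -- upper sequence
    obtain ⟨β, hβI, hβc, hβms, hβev⟩ :
        ∃ β : ℕ → ℝ, (∀ n, β n ∈ I) ∧ (∀ n, c ≤ β n)
          ∧ Tendsto (fun n => m (β n) * ∫ u in Ioi (β n), g u) atTop (nhds 0)
          ∧ ∀ t ∈ I, ∀ᶠ n in atTop, t ≤ β n := by
      by_cases hbdd : BddAbove I
      · set b := sSup I with hb
        have hbI : b ∉ I := by
          intro hbmem
          obtain ⟨ε, hε, hball⟩ := Metric.isOpen_iff.1 hIopen b hbmem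
          have hmem : b + ε/2 ∈ I := by
            apply hball
            simp only [Metric.mem_ball, Real.dist_eq]
            rw [abs_of_nonneg (by linarith)]; linarith
          have := le_csSup hbdd hmem; linarith
        have hcb : c < b := lt_of_le_of_ne (le_csSup hbdd hc) (by rintro rfl; exact hbI hc)
        refine ⟨fun n => b - (b - c)/(n+1), fun n => ?_, fun n => ?_, ?_, ?_⟩
        · have hlt : b - (b - c)/(n+1) < b := by
            have : (0:ℝ) < (b - c)/(n+1) := div_pos (by linarith) (by positivity)
            linarith
          obtain ⟨y, hyI, hy⟩ := exists_lt_of_lt_csSup ⟨c, hc⟩ hlt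
          refine hIconn hc hyI ?_ hy.le
          have h1' : (b - c)/(n+1) ≤ b - c := by
            apply div_le_self (by linarith)
            have : (0:ℝ) ≤ n := Nat.cast_nonneg n
            linarith
          linarith
        · have h1' : (b - c)/(n+1) ≤ b - c := by
            apply div_le_self (by linarith)
            have : (0:ℝ) ≤ n := Nat.cast_nonneg n
            linarith
          linarith
        · have hβt : Tendsto (fun n : ℕ => b - (b - c)/(n+1)) atTop (nhds b) := by
            have hd : Tendsto (fun n : ℕ => (b - c)/((n:ℝ)+1)) atTop (nhds 0) := by
              apply Tendsto.div_atTop (tendsto_const_nhds)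
              exact tendsto_atTop_add_const_right _ 1 tendsto_natCast_atTop_atTop
            have := tendsto_const_nhds (x := b) (f := atTop (α := ℕ)) |>.sub hd
            simpa using this
          have hcont : Tendsto (fun x => m x * ∫ u in Ioi x, g u) (nhds b)
              (nhds (m b * ∫ u in Ioi b, g u)) :=
            ((hm.continuous.mul hsc).continuousAt (x := b)).tendsto
          have := hcont.comp hβt
          rw [hs_zero b hbI, mul_zero] at this
          exact this
        · intro t ht
          have htb : t < b := lt_of_le_of_ne (le_csSup hbdd ht) (by rintro rfl; exact hbI ht)
          have hβt : Tendsto (fun n : ℕ => b - (b - c)/(n+1)) atTop (nhds b) := by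
            have hd : Tendsto (fun n : ℕ => (b - c)/((n:ℝ)+1)) atTop (nhds 0) := by
              apply Tendsto.div_atTop (tendsto_const_nhds)
              exact tendsto_atTop_add_const_right _ 1 tendsto_natCast_atTop_atTop
            have := tendsto_const_nhds (x := b) (f := atTop (α := ℕ)) |>.sub hd
            simpa using this
          exact (hβt.eventually (lt_mem_nhds htb)).mono fun n hn => hn.le
      · refine ⟨fun n => c + n, fun n => ?_, fun n => by
            show c ≤ c + (n:ℝ)
            have : (0:ℝ) ≤ n := Nat.cast_nonneg n
            linarith, ?_, ?_⟩
        · show c + (n:ℝ) ∈ I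
          obtain ⟨y, hyI, hy⟩ := not_bddAbove_iff.1 hbdd (c + n)
          exact hIconn hc hyI (by have : (0:ℝ) ≤ n := Nat.cast_nonneg n; linarith) hy.le
        · have hβt : Tendsto (fun n : ℕ => c + (n:ℝ)) atTop atTop :=
            tendsto_atTop_add_const_left _ c tendsto_natCast_atTop_atTop
          exact htop.comp hβt
        · intro t ht
          have hβt : Tendsto (fun n : ℕ => c + (n:ℝ)) atTop atTop :=
            tendsto_atTop_add_const_left _ c tendsto_natCast_atTop_atTop
          exact hβt.eventually_ge_atTop t
    -- lower sequence
    obtain ⟨α, hαI, hαc, hαms, hαev⟩ :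
        ∃ α : ℕ → ℝ, (∀ n, α n ∈ I) ∧ (∀ n, α n ≤ c)
          ∧ Tendsto (fun n => m (α n) * ∫ u in Ioi (α n), g u) atTop (nhds 0)
          ∧ ∀ t ∈ I, ∀ᶠ n in atTop, α n < t := by
      by_cases hbdd : BddBelow I
      · set a := sInf I with ha
        have haI : a ∉ I := by
          intro hamem
          obtain ⟨ε, hε, hball⟩ := Metric.isOpen_iff.1 hIopen a hamem
          have hmem : a - ε/2 ∈ I := by
            apply hball
            simp only [Metric.mem_ball, Real.dist_eq]
            rw [abs_of_nonpos (by linarith)]; linarith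
          have := csInf_le hbdd hmem; linarith
        have hca : a < c := lt_of_le_of_ne (csInf_le hbdd hc) (by rintro rfl; exact haI hc)
        have hαt : Tendsto (fun n : ℕ => a + (c - a)/(n+1)) atTop (nhds a) := by
          have hd : Tendsto (fun n : ℕ => (c - a)/((n:ℝ)+1)) atTop (nhds 0) := by
            apply Tendsto.div_atTop (tendsto_const_nhds)
            exact tendsto_atTop_add_const_right _ 1 tendsto_natCast_atTop_atTop
          have := tendsto_const_nhds (x := a) (f := atTop (α := ℕ)) |>.add hd
          simpa using this
        refine ⟨fun n => a + (c - a)/(n+1), fun n => ?_, fun n => ?_, ?_, ?_⟩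
        · have hlt : a < a + (c - a)/(n+1) := by
            have : (0:ℝ) < (c - a)/(n+1) := div_pos (by linarith) (by positivity)
            linarith
          obtain ⟨y, hyI, hy⟩ := exists_lt_of_csInf_lt ⟨c, hc⟩ hlt
          refine hIconn hyI hc hy.le ?_
          have h1' : (c - a)/(n+1) ≤ c - a := by
            apply div_le_self (by linarith)
            have : (0:ℝ) ≤ n := Nat.cast_nonneg n
            linarith
          linarith
        · have h1' : (c - a)/(n+1) ≤ c - a := by
            apply div_le_self (by linarith)
            have : (0:ℝ) ≤ n := Nat.cast_nonneg n
            linarith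
          linarith
        · have hcont : Tendsto (fun x => m x * ∫ u in Ioi x, g u) (nhds a)
              (nhds (m a * ∫ u in Ioi a, g u)) :=
            ((hm.continuous.mul hsc).continuousAt (x := a)).tendsto
          have := hcont.comp hαt
          rw [hs_zero a haI, mul_zero] at this
          exact this
        · intro t ht
          have hat : a < t := lt_of_le_of_ne (csInf_le hbdd ht) (by rintro rfl; exact haI ht)
          exact hαt.eventually (gt_mem_nhds hat)
      · refine ⟨fun n => c - n, fun n => ?_, fun n => by
            show c - (n:ℝ) ≤ c
            have : (0:ℝ) ≤ n := Nat.cast_nonneg n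
            linarith, ?_, ?_⟩
        · show c - (n:ℝ) ∈ I
          obtain ⟨y, hyI, hy⟩ := not_bddBelow_iff.1 hbdd (c - n)
          exact hIconn hyI hc hy.le (by have : (0:ℝ) ≤ n := Nat.cast_nonneg n; linarith)
        · have hαt : Tendsto (fun n : ℕ => c - (n:ℝ)) atTop atBot := by
            apply tendsto_atBot_add_const_left _ c
            exact tendsto_neg_atBot_iff.2 tendsto_natCast_atTop_atTop
          exact hbot.comp hαt
        · intro t ht
          have hαt : Tendsto (fun n : ℕ => c - (n:ℝ)) atTop atBot := by
            apply tendsto_atBot_add_const_left _ c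
            exact tendsto_neg_atBot_iff.2 tendsto_natCast_atTop_atTop
          exact hαt.eventually_lt_atBot t
    -- the interval identity for each `n`
    have hid : ∀ n, (∫ t in Ioc (α n) (β n), deriv m t * ∫ u in Ioi t, g u)
        = (∫ t in Ioc (α n) (β n), m t * g t)
          + m (β n) * (∫ u in Ioi (β n), g u)
          - m (α n) * (∫ u in Ioi (α n), g u) := by
      intro n
      have hαβ : α n ≤ β n := (hαc n).trans (hβc n)
      have hsub : Icc (α n) (β n) ⊆ I := fun t ht => hIconn (hαI n) (hβI n) ht.1 ht.2
      obtain ⟨x0, hx0, hmin⟩ := isCompact_Icc.exists_isMinOn (nonempty_Icc.2 hαβ)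
        hsc.continuousOn
      exact interval_ibp hg hm h1 h2 hαβ (hsub hx0) fun t ht => isMinOn_iff.1 hmin t ht
    -- dominated convergence for the two set integrals
    have hL : Tendsto (fun n => ∫ t in Ioc (α n) (β n), deriv m t * ∫ u in Ioi t, g u)
        atTop (nhds (∫ t, deriv m t * ∫ u in Ioi t, g u)) := by
      have he : (fun n => ∫ t in Ioc (α n) (β n), deriv m t * ∫ u in Ioi t, g u)
          = fun n => ∫ t, (Ioc (α n) (β n)).indicator
              (fun t => deriv m t * ∫ u in Ioi t, g u) t :=
        funext fun n => (integral_indicator measurableSet_Ioc).symm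
      rw [he]
      refine tendsto_integral_of_dominated_convergence
        (fun t => |deriv m t * ∫ u in Ioi t, g u|)
        (fun n => h1.aestronglyMeasurable.indicator measurableSet_Ioc)
        h1.abs ?_ ?_
      · intro n
        refine ae_of_all _ fun t => ?_
        rw [Real.norm_eq_abs]
        by_cases h : t ∈ Ioc (α n) (β n)
        · rw [Set.indicator_of_mem h]
        · rw [Set.indicator_of_notMem h, abs_zero]
          exact abs_nonneg _
      · refine ae_of_all _ fun t => ?_
        by_cases htI : t ∈ I
        · refine Tendsto.congr' ?_ tendsto_const_nhds
          filter_upwards [hαev t htI, hβev t htI] with n hn1 hn2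
          exact (Set.indicator_of_mem (Set.mem_Ioc.2 ⟨hn1, hn2⟩) (fun t => deriv m t * ∫ u in Ioi t, g u)).symm
        · have hz : ∀ n, (Ioc (α n) (β n)).indicator
              (fun t => deriv m t * ∫ u in Ioi t, g u) t = 0 := fun n =>
            Set.indicator_of_notMem
              (fun hmem => htI (hIconn (hαI n) (hβI n) hmem.1.le hmem.2)) _
          rw [funext hz, hs_zero t htI, mul_zero]
          exact tendsto_const_nhds
    have hR : Tendsto (fun n => ∫ t in Ioc (α n) (β n), m t * g t)
        atTop (nhds (∫ t, m t * g t)) := by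
      have he : (fun n => ∫ t in Ioc (α n) (β n), m t * g t)
          = fun n => ∫ t, (Ioc (α n) (β n)).indicator (fun t => m t * g t) t :=
        funext fun n => (integral_indicator measurableSet_Ioc).symm
      rw [he]
      refine tendsto_integral_of_dominated_convergence
        (fun t => |m t * g t|)
        (fun n => h2.aestronglyMeasurable.indicator measurableSet_Ioc)
        h2.abs ?_ ?_
      · intro n
        refine ae_of_all _ fun t => ?_
        rw [Real.norm_eq_abs]
        by_cases h : t ∈ Ioc (α n) (β n)
        · rw [Set.indicator_of_mem h]
        · rw [Set.indicator_of_notMem h, abs_zero]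
          exact abs_nonneg _
      · filter_upwards [hoff] with t ht
        by_cases htI : t ∈ I
        · refine Tendsto.congr' ?_ tendsto_const_nhds
          filter_upwards [hαev t htI, hβev t htI] with n hn1 hn2
          exact (Set.indicator_of_mem (Set.mem_Ioc.2 ⟨hn1, hn2⟩) (fun t => m t * g t)).symm
        · have hz : ∀ n, (Ioc (α n) (β n)).indicator (fun t => m t * g t) t = 0 := fun n =>
            Set.indicator_of_notMem
              (fun hmem => htI (hIconn (hαI n) (hβI n) hmem.1.le hmem.2)) _
          rw [funext hz, ht htI, mul_zero]
          exact tendsto_const_nhds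
    have hcomb := (hR.add hβms).sub hαms
    rw [add_zero, sub_zero] at hcomb
    have he2 : (fun n => ∫ t in Ioc (α n) (β n), deriv m t * ∫ u in Ioi t, g u)
        = fun n => (∫ t in Ioc (α n) (β n), m t * g t)
          + m (β n) * (∫ u in Ioi (β n), g u)
          - m (α n) * (∫ u in Ioi (α n), g u) := funext hid
    rw [he2] at hL
    exact tendsto_nhds_unique hL hcomb

lemma l2_mul_int {Ω : Type*} [MeasurableSpace Ω] {μ : Measure Ω} {f h : Ω → ℝ}
    (hf : MemLp f 2 μ) (hh : MemLp h 2 μ) :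
    Integrable (fun ω => f ω * h ω) μ := by
  refine Integrable.mono' ((hf.integrable_sq.add hh.integrable_sq).const_mul 2⁻¹)
    (hf.aestronglyMeasurable.mul hh.aestronglyMeasurable) (ae_of_all _ fun ω => ?_)
  rw [Real.norm_eq_abs, abs_mul]
  simp only [Pi.add_apply]
  nlinarith [sq_nonneg (|f ω| - |h ω|), sq_abs (f ω), sq_abs (h ω), abs_nonneg (f ω),
    abs_nonneg (h ω)]

end S9

/-- If the conditional expectation of `T` given `X` is linear,
`μ(X) = Xᵀπ₀` a.s., then the population linear-projection coefficient `π` equals `π₀`, the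
misspecification error `Δ(X)` vanishes (a.s.), and the population regression coefficient on `T`
equals the Naive Regression-Weighted Effect:
`β = E_X[∫ ∂ₜ m(t,X) w(t,X) dt]` with `w(t,x) = s(t,x)/E_X[Var(T|X)]`. -/
theorem stmt9 {Ω : Type*} [MeasurableSpace Ω] (μ : Measure Ω) [IsProbabilityMeasure μ]
    {d : ℕ} [NeZero d] (Y T : Ω → ℝ) (X : Ω → Fin d → ℝ)
    (hY : MemLp Y 2 μ) (hT : MemLp T 2 μ)
    (hTmeas : Measurable T) (hXmeas : Measurable X)
    (hXL2 : ∀ i, MemLp (fun ω => X ω i) 2 μ)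
    (hX0 : ∀ ω, X ω 0 = 1)
    -- population linear projection of `T` on `X`
    (π : Fin d → ℝ)
    (hπ : ∀ i, ∫ ω, X ω i * (T ω - ∑ j, π j * X ω j) ∂μ = 0)
    (hinv : IsUnit (Matrix.of fun i j : Fin d => ∫ ω, X ω i * X ω j ∂μ))
    -- conditional expectation of `T` given `X` and the misspecification error
    (μT : Ω → ℝ) (hμT : μT = μ[T | MeasurableSpace.comap X inferInstance])
    (Δ : Ω → ℝ) (hΔ : ∀ ω, Δ ω = μT ω - ∑ j, π j * X ω j)
    (hvar : 0 < pvar μ (fun ω => T ω - ∑ j, π j * X ω j))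
    (β : ℝ)
    (hβ : β = pcov μ Y (fun ω => T ω - ∑ j, π j * X ω j)
        / pvar μ (fun ω => T ω - ∑ j, π j * X ω j))
    -- `(T, X)` has a joint density with conditional density `fTX t x` of `T` given `X = x`
    (fTX : ℝ → (Fin d → ℝ) → ℝ)
    (hf_nonneg : ∀ t x, 0 ≤ fTX t x)
    (hf_meas : Measurable (Function.uncurry fTX))
    (hf_L1 : ∀ x, Integrable (fun u => fTX u x))
    (hf_one : ∀ x, ∫ u, fTX u x = 1)
    (hf_mean_int : ∀ x, Integrable (fun u => u * fTX u x))
    (hdisint : ∀ g : ℝ → (Fin d → ℝ) → ℝ, Integrable (fun ω => g (T ω) (X ω)) μ →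
        ∫ ω, g (T ω) (X ω) ∂μ = ∫ ω, (∫ t, g t (X ω) * fTX t (X ω)) ∂μ)
    -- conditional mean of `T` given `X = x`
    (μx : (Fin d → ℝ) → ℝ) (hμx : ∀ x, μx x = ∫ u, u * fTX u x)
    (hμTμx : (fun ω => μx (X ω)) =ᵐ[μ] μT)
    -- conditional variance of `T` given `X = x`, with `0 < E_X[Var(T|X)] < ∞`
    (varx : (Fin d → ℝ) → ℝ) (hvarx : ∀ x, varx x = ∫ u, (u - μx x) ^ 2 * fTX u x)
    (hvarx_int : ∀ x, Integrable (fun u => (u - μx x) ^ 2 * fTX u x))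
    (EVar : ℝ) (hEVar : EVar = ∫ ω, varx (X ω) ∂μ)
    (hEVarInt : Integrable (fun ω => varx (X ω)) μ)
    (hEVarpos : 0 < EVar)
    -- the weight numerator `s` and the NRWE weights `w`
    (s : ℝ → (Fin d → ℝ) → ℝ)
    (hs : ∀ t x, s t x = ∫ u in Set.Ioi t, (u - μx x) * fTX u x)
    (w : ℝ → (Fin d → ℝ) → ℝ)
    (hw : ∀ t x, w t x = s t x / EVar)
    -- the regression function `m(t,x) = E[Y | T = t, X = x]`, differentiable in `t`
    (m : ℝ → (Fin d → ℝ) → ℝ)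
    (hm : μ[Y | MeasurableSpace.comap (fun ω => (T ω, X ω)) inferInstance]
        =ᵐ[μ] fun ω => m (T ω) (X ω))
    (hm_diff : ∀ x, Differentiable ℝ (fun t => m t x))
    -- boundary conditions and finiteness of the displayed integrals
    (hbound_top : ∀ x, Tendsto (fun t => m t x * s t x) atTop (nhds 0))
    (hbound_bot : ∀ x, Tendsto (fun t => m t x * s t x) atBot (nhds 0))
    (hint1 : ∀ x, Integrable (fun t => deriv (fun t' => m t' x) t * s t x))
    (hint2 : Integrable (fun ω => ∫ t, deriv (fun t' => m t' (X ω)) t * s t (X ω)) μ)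
    (hint3 : ∀ x, Integrable (fun t => m t x * ((t - μx x) * fTX t x)))
    (hint4 : Integrable (fun ω => m (T ω) (X ω) * (T ω - μx (X ω))) μ)
    -- linearity of the conditional expectation: `μ(X) = Xᵀπ₀` almost surely
    (π₀ : Fin d → ℝ)
    (hlin : ∀ᵐ ω ∂μ, μT ω = ∑ j, π₀ j * X ω j) :
    π = π₀
    ∧ (∀ᵐ ω ∂μ, Δ ω = 0)
    ∧ β = ∫ ω, (∫ t, deriv (fun t' => m t' (X ω)) t * w t (X ω)) ∂μ := by
  classical
  have hble : MeasurableSpace.comap X inferInstance ≤ ‹MeasurableSpace Ω› := hXmeas.comap_le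
  have hS2 : MemLp (fun ω => ∑ j, π j * X ω j) 2 μ :=
    MemLp.ae_eq (Filter.Eventually.of_forall fun ω => by simp)
      (memLp_finset_sum' Finset.univ fun j _ => (hXL2 j).const_mul (π j))
  have hXmX : Measurable[MeasurableSpace.comap X inferInstance] X := fun u hu => ⟨u, hu, rfl⟩
  -- ∫ Xᵢ T = ∫ Xᵢ μT
  have key1 : ∀ i, ∫ ω, X ω i * T ω ∂μ = ∫ ω, X ω i * μT ω ∂μ := by
    intro i
    have hsm : StronglyMeasurable[MeasurableSpace.comap X inferInstance] (fun ω => X ω i) :=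
      ((measurable_pi_apply i).comp hXmX).stronglyMeasurable
    have hint : Integrable (fun ω => X ω i * T ω) μ := S9.l2_mul_int (hXL2 i) hT
    have hpull := condExp_mul_of_stronglyMeasurable_left (μ := μ) hsm hint (hT.integrable one_le_two)
    calc ∫ ω, X ω i * T ω ∂μ
        = ∫ ω, (μ[(fun ω => X ω i) * T | MeasurableSpace.comap X inferInstance]) ω ∂μ :=
          (integral_condExp hble).symm
      _ = ∫ ω, X ω i * (μ[T | MeasurableSpace.comap X inferInstance]) ω ∂μ := by
          refine integral_congr_ae ?_
          filter_upwards [hpull] with ω hω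
          simpa using hω
      _ = ∫ ω, X ω i * μT ω ∂μ := by rw [hμT]
  have sum_form : ∀ (ρ : Fin d → ℝ) i, (∫ ω, X ω i * ∑ j, ρ j * X ω j ∂μ)
      = ∑ j, ρ j * ∫ ω, X ω i * X ω j ∂μ := by
    intro ρ i
    have h2 : ∀ ω, X ω i * ∑ j, ρ j * X ω j = ∑ j, ρ j * (X ω i * X ω j) := by
      intro ω
      rw [Finset.mul_sum]
      exact Finset.sum_congr rfl fun j _ => by ring
    simp_rw [h2]
    rw [integral_finset_sum _ fun j _ => (S9.l2_mul_int (hXL2 i) (hXL2 j)).const_mul (ρ j)]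
    exact Finset.sum_congr rfl fun j _ => integral_const_mul _ _
  have key2 : ∀ i, ∫ ω, X ω i * μT ω ∂μ = ∑ j, π₀ j * ∫ ω, X ω i * X ω j ∂μ := by
    intro i
    rw [← sum_form π₀ i]
    refine integral_congr_ae ?_
    filter_upwards [hlin] with ω hω
    rw [hω]
  have key3 : ∀ i, ∫ ω, X ω i * T ω ∂μ = ∑ j, π j * ∫ ω, X ω i * X ω j ∂μ := by
    intro i
    rw [← sum_form π i]
    have hsub : ∫ ω, X ω i * (T ω - ∑ j, π j * X ω j) ∂μ
        = (∫ ω, X ω i * T ω ∂μ) - ∫ ω, X ω i * ∑ j, π j * X ω j ∂μ := by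
      rw [← integral_sub (S9.l2_mul_int (hXL2 i) hT) (S9.l2_mul_int (hXL2 i) hS2)]
      exact integral_congr_ae (Filter.Eventually.of_forall fun ω => by ring)
    have := hπ i
    rw [hsub] at this
    linarith
  have hπeq : π = π₀ := by
    have hinj := Matrix.mulVec_injective_iff_isUnit.2 hinv
    have hmv : (Matrix.of fun i j : Fin d => ∫ ω, X ω i * X ω j ∂μ).mulVec
        (fun j => π₀ j - π j) = 0 := by
      funext i
      simp only [Matrix.mulVec, Matrix.of_apply, dotProduct]
      have e1 : ∀ j, (∫ ω, X ω i * X ω j ∂μ) * (π₀ j - π j)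
          = π₀ j * (∫ ω, X ω i * X ω j ∂μ) - π j * ∫ ω, X ω i * X ω j ∂μ := fun j => by ring
      simp_rw [e1]
      rw [Finset.sum_sub_distrib, ← key2 i, ← key3 i, ← key1 i]
      simp
    have h0 : (fun j => π₀ j - π j) = 0 := hinj (by rw [hmv, Matrix.mulVec_zero])
    funext j
    have := congrFun h0 j
    simp only [Pi.zero_apply] at this
    linarith
  refine ⟨hπeq, ?_, ?_⟩
  · filter_upwards [hlin] with ω hω
    rw [hΔ, hω, hπeq, sub_self]
  · -- Part 3
    have hMemE : MemLp (fun ω => T ω - ∑ j, π j * X ω j) 2 μ := hT.sub hS2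
    have hae : (fun ω => ∑ j, π j * X ω j) =ᵐ[μ] (fun ω => μx (X ω)) := by
      filter_upwards [hlin, hμTμx] with ω h1 h2
      rw [hπeq, ← h1, h2]
    have haeE : (fun ω => T ω - ∑ j, π j * X ω j) =ᵐ[μ] (fun ω => T ω - μx (X ω)) := by
      filter_upwards [hae] with ω h
      rw [h]
    have hTμx2 : MemLp (fun ω => T ω - μx (X ω)) 2 μ := MemLp.ae_eq haeE hMemE
    have hE0 : ∫ ω, (T ω - ∑ j, π j * X ω j) ∂μ = 0 := by
      have h01 : ∫ ω, (T ω - ∑ j, π j * X ω j) ∂μ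
          = ∫ ω, X ω 0 * (T ω - ∑ j, π j * X ω j) ∂μ :=
        integral_congr_ae (Filter.Eventually.of_forall fun ω => by beta_reduce; rw [hX0 ω, one_mul])
      rw [h01, hπ 0]
    -- pvar = EVar
    have hsq_int : Integrable (fun ω => (T ω - μx (X ω)) * (T ω - μx (X ω))) μ :=
      S9.l2_mul_int hTμx2 hTμx2
    have hpvar : pvar μ (fun ω => T ω - ∑ j, π j * X ω j) = EVar := by
      have h1 : pvar μ (fun ω => T ω - ∑ j, π j * X ω j)
          = ∫ ω, (T ω - ∑ j, π j * X ω j) * (T ω - ∑ j, π j * X ω j) ∂μ := by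
        simp only [pvar, pcov]
        rw [hE0, mul_zero, sub_zero]
      have h2 : ∫ ω, (T ω - ∑ j, π j * X ω j) * (T ω - ∑ j, π j * X ω j) ∂μ
          = ∫ ω, (T ω - μx (X ω)) * (T ω - μx (X ω)) ∂μ :=
        integral_congr_ae (by filter_upwards [haeE] with ω h; beta_reduce; rw [h])
      have h3 := hdisint (fun t x => (t - μx x) * (t - μx x)) hsq_int
      have h4 : ∫ ω, (∫ t, ((t - μx (X ω)) * (t - μx (X ω))) * fTX t (X ω)) ∂μ
          = ∫ ω, varx (X ω) ∂μ := by
        refine integral_congr_ae (Filter.Eventually.of_forall fun ω => ?_)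
        beta_reduce
        rw [hvarx (X ω)]
        exact integral_congr_ae (Filter.Eventually.of_forall fun t => by beta_reduce; ring)
      rw [h1, h2, h3, h4, hEVar]
    -- the inner integration-by-parts identity
    have inner_eq : ∀ x : Fin d → ℝ,
        (∫ t, (m t x * (t - μx x)) * fTX t x)
          = ∫ t, deriv (fun t' => m t' x) t * s t x := by
      intro x
      have hg_int : Integrable (fun u => (u - μx x) * fTX u x) :=
        ((hf_mean_int x).sub ((hf_L1 x).const_mul (μx x))).congr
          (Filter.Eventually.of_forall fun u => by simp only [Pi.sub_apply]; ring)
      have hneg : ∀ u, u ≤ μx x → (u - μx x) * fTX u x ≤ 0 := fun u hu =>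
        mul_nonpos_iff.2 (Or.inr ⟨by linarith, hf_nonneg u x⟩)
      have hpos : ∀ u, μx x ≤ u → 0 ≤ (u - μx x) * fTX u x := fun u hu =>
        mul_nonneg (by linarith) (hf_nonneg u x)
      have htot : (∫ u, (u - μx x) * fTX u x) = 0 := by
        have h5 : (∫ u, (u - μx x) * fTX u x)
            = (∫ u, u * fTX u x) - ∫ u, μx x * fTX u x := by
          rw [← integral_sub (hf_mean_int x) ((hf_L1 x).const_mul (μx x))]
          exact integral_congr_ae (Filter.Eventually.of_forall fun u => by ring)
        rw [h5, integral_const_mul, hf_one, mul_one, ← hμx x, sub_self]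
      have hse : (fun t => m t x * ∫ u in Set.Ioi t, (u - μx x) * fTX u x)
          = fun t => m t x * s t x := funext fun t => by rw [hs t x]
      have htop' : Tendsto (fun t => m t x * ∫ u in Set.Ioi t, (u - μx x) * fTX u x)
          atTop (nhds 0) := by rw [hse]; exact hbound_top x
      have hbot' : Tendsto (fun t => m t x * ∫ u in Set.Ioi t, (u - μx x) * fTX u x)
          atBot (nhds 0) := by rw [hse]; exact hbound_bot x
      have h1' : Integrable
          (fun t => deriv (fun t' => m t' x) t * ∫ u in Set.Ioi t, (u - μx x) * fTX u x) :=
        (hint1 x).congr (Filter.Eventually.of_forall fun t => by beta_reduce; rw [hs t x])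
      have hmain := S9.ibp_main (μ0 := μx x) hg_int hneg hpos htot (hm_diff x)
        htop' hbot' h1' (hint3 x)
      calc (∫ t, (m t x * (t - μx x)) * fTX t x)
          = ∫ t, m t x * ((t - μx x) * fTX t x) :=
            integral_congr_ae (Filter.Eventually.of_forall fun t => by beta_reduce; ring)
        _ = ∫ t, deriv (fun t' => m t' x) t * ∫ u in Set.Ioi t, (u - μx x) * fTX u x :=
            hmain.symm
        _ = ∫ t, deriv (fun t' => m t' x) t * s t x :=
            integral_congr_ae (Filter.Eventually.of_forall fun t => by beta_reduce; rw [hs t x])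
    -- pcov computation
    have hble2 : MeasurableSpace.comap (fun ω => (T ω, X ω)) inferInstance
        ≤ ‹MeasurableSpace Ω› := (hTmeas.prodMk hXmeas).comap_le
    have hpairm : Measurable[MeasurableSpace.comap (fun ω => (T ω, X ω)) inferInstance]
        (fun ω => (T ω, X ω)) := fun u hu => ⟨u, hu, rfl⟩
    have hφ : Measurable (fun p : ℝ × (Fin d → ℝ) => p.1 - ∑ j, π j * p.2 j) := by
      refine measurable_fst.sub ?_
      exact Finset.measurable_sum _ fun j _ =>
        (by fun_prop)
    have he_sm : StronglyMeasurable[MeasurableSpace.comap (fun ω => (T ω, X ω)) inferInstance]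
        (fun ω => T ω - ∑ j, π j * X ω j) :=
      (hφ.comp hpairm).stronglyMeasurable
    have hYe_int : Integrable ((fun ω => T ω - ∑ j, π j * X ω j) * Y) μ :=
      S9.l2_mul_int hMemE hY
    have hpull := condExp_mul_of_stronglyMeasurable_left (μ := μ) he_sm hYe_int
      (hY.integrable one_le_two)
    have hpcov : pcov μ Y (fun ω => T ω - ∑ j, π j * X ω j)
        = ∫ ω, (∫ t, deriv (fun t' => m t' (X ω)) t * s t (X ω)) ∂μ := by
      have c1 : pcov μ Y (fun ω => T ω - ∑ j, π j * X ω j)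
          = ∫ ω, Y ω * (T ω - ∑ j, π j * X ω j) ∂μ := by
        simp only [pcov]
        rw [hE0, mul_zero, sub_zero]
      have c2 : ∫ ω, Y ω * (T ω - ∑ j, π j * X ω j) ∂μ
          = ∫ ω, ((fun ω => T ω - ∑ j, π j * X ω j) * Y) ω ∂μ :=
        integral_congr_ae (Filter.Eventually.of_forall fun ω => by
          beta_reduce; simp only [Pi.mul_apply]; ring)
      have c3 : ∫ ω, ((fun ω => T ω - ∑ j, π j * X ω j) * Y) ω ∂μ
          = ∫ ω, (μ[(fun ω => T ω - ∑ j, π j * X ω j) * Y |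
              MeasurableSpace.comap (fun ω => (T ω, X ω)) inferInstance]) ω ∂μ :=
        (integral_condExp hble2).symm
      have c4 : ∫ ω, (μ[(fun ω => T ω - ∑ j, π j * X ω j) * Y |
              MeasurableSpace.comap (fun ω => (T ω, X ω)) inferInstance]) ω ∂μ
          = ∫ ω, m (T ω) (X ω) * (T ω - ∑ j, π j * X ω j) ∂μ := by
        refine integral_congr_ae ?_
        filter_upwards [hpull, hm] with ω h1 h2
        beta_reduce
        rw [h1]
        simp only [Pi.mul_apply]
        rw [h2]
        ring
      have c5 : ∫ ω, m (T ω) (X ω) * (T ω - ∑ j, π j * X ω j) ∂μ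
          = ∫ ω, m (T ω) (X ω) * (T ω - μx (X ω)) ∂μ := by
        refine integral_congr_ae ?_
        filter_upwards [hae] with ω h
        beta_reduce
        rw [h]
      have c6 := hdisint (fun t x => m t x * (t - μx x)) hint4
      have c7 : ∫ ω, (∫ t, (m t (X ω) * (t - μx (X ω))) * fTX t (X ω)) ∂μ
          = ∫ ω, (∫ t, deriv (fun t' => m t' (X ω)) t * s t (X ω)) ∂μ :=
        integral_congr_ae (Filter.Eventually.of_forall fun ω => inner_eq (X ω))
      rw [c1, c2, c3, c4, c5, c6, c7]
    calc β = pcov μ Y (fun ω => T ω - ∑ j, π j * X ω j)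
        / pvar μ (fun ω => T ω - ∑ j, π j * X ω j) := hβ
      _ = (∫ ω, (∫ t, deriv (fun t' => m t' (X ω)) t * s t (X ω)) ∂μ) / EVar := by
          rw [hpcov, hpvar]
      _ = ∫ ω, (∫ t, deriv (fun t' => m t' (X ω)) t * s t (X ω)) / EVar ∂μ :=
          (integral_div EVar _).symm
      _ = ∫ ω, (∫ t, deriv (fun t' => m t' (X ω)) t * w t (X ω)) ∂μ := by
          refine integral_congr_ae (Filter.Eventually.of_forall fun ω => ?_)
          beta_reduce
          rw [← integral_div]
          refine integral_congr_ae (Filter.Eventually.of_forall fun t => ?_)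
          beta_reduce
          rw [hw t (X ω), mul_div_assoc]
end

section
/- Corollary (local-projection decomposition): the population regression coefficient on T satisfies β = E_X[ β(X) · w₁(X) ] + β_Δ · w₀, where β(X) := Cov(Y, T | X)/Var(T | X) is the local regression coefficient of Y on T given X, β_Δ := Cov(Y, Δ(X))/Var(Δ(X)) is the population regression coefficient of Y on Δ(X), w₁(X) := Var(T | X)/(E_X[Var(T | X)] + Var(Δ(X))), and w₀ := Var(Δ(X))/(E_X[Var(T | X)] + Var(Δ(X))). -/
open MeasureTheory

section helpers
variable {Ω : Type*} {m m0 : MeasurableSpace Ω} {μ : Measure Ω}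

lemma int_mul {f g : Ω → ℝ} (hf : MemLp f 2 μ) (hg : MemLp g 2 μ) :
    Integrable (fun ω => f ω * g ω) μ := by
  have h : (fun ω => f ω * g ω)
      = fun ω => ((f ω + g ω) ^ 2 - f ω ^ 2 - g ω ^ 2) / 2 := by
    funext ω; ring
  rw [h]
  exact (((hf.add hg).integrable_sq.sub hf.integrable_sq).sub hg.integrable_sq).div_const 2

lemma memL2_condexp (hm : m ≤ m0) [IsFiniteMeasure μ]
    {f : Ω → ℝ} (hf : MemLp f 2 μ) : MemLp (μ[f|m]) 2 μ := by
  have heq : (condExpL2 ℝ ℝ hm (hf.toLp f) : Ω → ℝ) =ᵐ[μ] μ[f|m] := by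
    refine ae_eq_condExp_of_forall_setIntegral_eq hm (hf.integrable one_le_two)
      (fun s _ hμs => integrableOn_condExpL2_of_measure_ne_top hm hμs.ne _)
      (fun s hs hμs => ?_)
      (aestronglyMeasurable_condExpL2 hm _)
    rw [integral_condExpL2_eq hm (hf.toLp f) hs hμs.ne]
    exact setIntegral_congr_ae (hm s hs) (hf.coeFn_toLp.mono fun x hx _ => hx)
  exact (Lp.memLp _).ae_eq heq

lemma integral_mul_condexp (hm : m ≤ m0) [IsFiniteMeasure μ] {f g : Ω → ℝ}
    (hf : MemLp f 2 μ) (hg : MemLp g 2 μ) (hgm : StronglyMeasurable[m] g) :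
    ∫ ω, f ω * g ω ∂μ = ∫ ω, (μ[f|m]) ω * g ω ∂μ := by
  have hint : Integrable (g * f) μ := by
    have := int_mul hg hf
    exact this.congr (by filter_upwards with ω; rfl)
  have h2 : μ[g * f|m] =ᵐ[μ] g * μ[f|m] :=
    condExp_mul_of_stronglyMeasurable_left hgm hint (hf.integrable one_le_two)
  calc ∫ ω, f ω * g ω ∂μ = ∫ ω, (g * f) ω ∂μ := by
        congr 1; funext ω; exact mul_comm _ _
    _ = ∫ ω, (μ[g * f|m]) ω ∂μ := (integral_condExp hm).symm
    _ = ∫ ω, (g * μ[f|m]) ω ∂μ := integral_congr_ae h2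
    _ = ∫ ω, (μ[f|m]) ω * g ω ∂μ := by congr 1; funext ω; exact mul_comm _ _

end helpers

/-- **local-projection decomposition.** The population regression coefficient
on `T` satisfies `β = E_X[β(X) w₁(X)] + β_Δ w₀`, where `β(X) = Cov(Y,T|X)/Var(T|X)` is the
local regression coefficient, `β_Δ = Cov(Y, Δ(X))/Var(Δ(X))`,
`w₁(X) = Var(T|X)/(E_X[Var(T|X)] + Var(Δ(X)))`, and
`w₀ = Var(Δ(X))/(E_X[Var(T|X)] + Var(Δ(X)))`. -/
theorem stmt11 {Ω : Type*} [MeasurableSpace Ω] (μ : Measure Ω) [IsProbabilityMeasure μ]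
    {d : ℕ} [NeZero d] (Y T : Ω → ℝ) (X : Ω → Fin d → ℝ)
    (hY : MemLp Y 2 μ) (hT : MemLp T 2 μ)
    (hTmeas : Measurable T) (hXmeas : Measurable X)
    (hXL2 : ∀ i, MemLp (fun ω => X ω i) 2 μ)
    (hX0 : ∀ ω, X ω 0 = 1)
    -- population linear projection of `T` on `X`
    (π : Fin d → ℝ)
    (hπ : ∀ i, ∫ ω, X ω i * (T ω - ∑ j, π j * X ω j) ∂μ = 0)
    (hinv : IsUnit (Matrix.of fun i j : Fin d => ∫ ω, X ω i * X ω j ∂μ))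
    -- conditional moments of `(Y, T)` given `X`
    (μT : Ω → ℝ) (hμT : μT = μ[T | MeasurableSpace.comap X inferInstance])
    (μY : Ω → ℝ) (hμY : μY = μ[Y | MeasurableSpace.comap X inferInstance])
    (μYT : Ω → ℝ)
    (hμYT : μYT = μ[(fun ω => Y ω * T ω) | MeasurableSpace.comap X inferInstance])
    (μT2 : Ω → ℝ)
    (hμT2 : μT2 = μ[(fun ω => T ω ^ 2) | MeasurableSpace.comap X inferInstance])
    (condVarT : Ω → ℝ) (hcondVarT : ∀ ω, condVarT ω = μT2 ω - μT ω ^ 2)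
    (condCovYT : Ω → ℝ) (hcondCovYT : ∀ ω, condCovYT ω = μYT ω - μY ω * μT ω)
    (hcondVarT_pos : ∀ᵐ ω ∂μ, 0 < condVarT ω)
    -- `0 < E_X[Var(T|X)] < ∞`
    (EVar : ℝ) (hEVar : EVar = ∫ ω, condVarT ω ∂μ)
    (hEVarInt : Integrable condVarT μ) (hEVarpos : 0 < EVar)
    -- the misspecification error, with `Var(Δ(X)) > 0`
    (Δ : Ω → ℝ) (hΔ : ∀ ω, Δ ω = μT ω - ∑ j, π j * X ω j)
    (hVarΔpos : 0 < pvar μ Δ)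
    -- the population regression coefficient on `T`
    (hvar : 0 < pvar μ (fun ω => T ω - ∑ j, π j * X ω j))
    (β : ℝ)
    (hβ : β = pcov μ Y (fun ω => T ω - ∑ j, π j * X ω j)
        / pvar μ (fun ω => T ω - ∑ j, π j * X ω j))
    -- the local regression coefficient, the coefficient on `Δ(X)`, and the weights
    (betaX : Ω → ℝ) (hbetaX : ∀ ω, betaX ω = condCovYT ω / condVarT ω)
    (βΔ : ℝ) (hβΔ : βΔ = pcov μ Y Δ / pvar μ Δ)
    (w1 : Ω → ℝ) (hw1 : ∀ ω, w1 ω = condVarT ω / (EVar + pvar μ Δ))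
    (w0 : ℝ) (hw0 : w0 = pvar μ Δ / (EVar + pvar μ Δ))
    (hint : Integrable (fun ω => betaX ω * w1 ω) μ) :
    β = (∫ ω, betaX ω * w1 ω ∂μ) + βΔ * w0 := by
  have hm : MeasurableSpace.comap X inferInstance ≤ _ := hXmeas.comap_le
  have hXm : Measurable[MeasurableSpace.comap X inferInstance] X :=
    Measurable.of_comap_le le_rfl
  have hLm : StronglyMeasurable[MeasurableSpace.comap X inferInstance]
      (fun ω => ∑ j, π j * X ω j) := by
    refine Measurable.stronglyMeasurable ?_
    exact Finset.measurable_sum _ fun i _ =>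
      (((measurable_pi_apply i).comp hXm).const_mul (π i))
  have hL2 : MemLp (fun ω => ∑ j, π j * X ω j) 2 μ :=
    memLp_finset_sum _ fun i _ => (hXL2 i).const_mul (π i)
  have hμTm : StronglyMeasurable[MeasurableSpace.comap X inferInstance] μT :=
    hμT ▸ stronglyMeasurable_condExp
  have hμT2p : MemLp μT 2 μ := hμT ▸ memL2_condexp hm hT
  have hμY2p : MemLp μY 2 μ := hμY ▸ memL2_condexp hm hY
  -- integrability
  have iT : Integrable T μ := hT.integrable one_le_two
  have iL : Integrable (fun ω => ∑ j, π j * X ω j) μ := hL2.integrable one_le_two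
  have iY : Integrable Y μ := hY.integrable one_le_two
  have imT : Integrable μT μ := hμT2p.integrable one_le_two
  have iTT : Integrable (fun ω => T ω * T ω) μ := int_mul hT hT
  have iTL : Integrable (fun ω => T ω * ∑ j, π j * X ω j) μ := int_mul hT hL2
  have iLL : Integrable (fun ω => (∑ j, π j * X ω j) * ∑ j, π j * X ω j) μ := int_mul hL2 hL2
  have iYT : Integrable (fun ω => Y ω * T ω) μ := int_mul hY hT
  have iYL : Integrable (fun ω => Y ω * ∑ j, π j * X ω j) μ := int_mul hY hL2
  have iYmT : Integrable (fun ω => Y ω * μT ω) μ := int_mul hY hμT2p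
  have imTmT : Integrable (fun ω => μT ω * μT ω) μ := int_mul hμT2p hμT2p
  have imTL : Integrable (fun ω => μT ω * ∑ j, π j * X ω j) μ := int_mul hμT2p hL2
  have imYmT : Integrable (fun ω => μY ω * μT ω) μ := int_mul hμY2p hμT2p
  have iμYT : Integrable μYT μ := hμYT ▸ integrable_condExp
  have iμT2 : Integrable μT2 μ := hμT2 ▸ integrable_condExp
  -- key conditional-expectation identities
  have E1 : ∫ ω, μT ω ∂μ = ∫ ω, T ω ∂μ := by rw [hμT]; exact integral_condExp hm
  have E2 : ∫ ω, T ω * ∑ j, π j * X ω j ∂μ = ∫ ω, μT ω * ∑ j, π j * X ω j ∂μ := by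
    rw [hμT]; exact integral_mul_condexp hm hT hL2 hLm
  have E3 : ∫ ω, Y ω * μT ω ∂μ = ∫ ω, μY ω * μT ω ∂μ := by
    rw [hμY]; exact integral_mul_condexp hm hY hμT2p hμTm
  have E4 : ∫ ω, μYT ω ∂μ = ∫ ω, Y ω * T ω ∂μ := by rw [hμYT]; exact integral_condExp hm
  have E5 : ∫ ω, μT2 ω ∂μ = ∫ ω, T ω * T ω ∂μ := by
    rw [hμT2]
    have h := integral_condExp (μ := μ) (f := fun ω => T ω ^ 2) hm
    simpa [pow_two] using h
  -- expansions
  have hS2 : ∫ ω, (T ω - ∑ j, π j * X ω j) * (T ω - ∑ j, π j * X ω j) ∂μ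
      = (∫ ω, T ω * T ω ∂μ) - 2 * (∫ ω, T ω * ∑ j, π j * X ω j ∂μ)
        + ∫ ω, (∑ j, π j * X ω j) * ∑ j, π j * X ω j ∂μ := by
    have h : (fun ω => (T ω - ∑ j, π j * X ω j) * (T ω - ∑ j, π j * X ω j))
        = fun ω => (T ω * T ω - 2 * (T ω * ∑ j, π j * X ω j))
          + (∑ j, π j * X ω j) * ∑ j, π j * X ω j := by
      funext ω; ring
    have i1 : Integrable (fun ω => 2 * (T ω * ∑ j, π j * X ω j)) μ := iTL.const_mul 2
    have i2 : Integrable (fun ω => T ω * T ω - 2 * (T ω * ∑ j, π j * X ω j)) μ := iTT.sub i1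
    rw [h, integral_add i2 iLL, integral_sub iTT i1, integral_const_mul 2 _]
  have hS1 : ∫ ω, (T ω - ∑ j, π j * X ω j) ∂μ
      = (∫ ω, T ω ∂μ) - ∫ ω, (∑ j, π j * X ω j) ∂μ := integral_sub iT iL
  have hΔ2 : ∫ ω, Δ ω * Δ ω ∂μ
      = (∫ ω, μT ω * μT ω ∂μ) - 2 * (∫ ω, μT ω * ∑ j, π j * X ω j ∂μ)
        + ∫ ω, (∑ j, π j * X ω j) * ∑ j, π j * X ω j ∂μ := by
    have h : (fun ω => Δ ω * Δ ω)
        = fun ω => (μT ω * μT ω - 2 * (μT ω * ∑ j, π j * X ω j))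
          + (∑ j, π j * X ω j) * ∑ j, π j * X ω j := by
      funext ω; rw [hΔ]; ring
    have i1 : Integrable (fun ω => 2 * (μT ω * ∑ j, π j * X ω j)) μ := imTL.const_mul 2
    have i2 : Integrable (fun ω => μT ω * μT ω - 2 * (μT ω * ∑ j, π j * X ω j)) μ := imTmT.sub i1
    rw [h, integral_add i2 iLL, integral_sub imTmT i1, integral_const_mul 2 _]
  have hΔ1 : ∫ ω, Δ ω ∂μ = (∫ ω, μT ω ∂μ) - ∫ ω, (∑ j, π j * X ω j) ∂μ := by
    have h : Δ = fun ω => μT ω - ∑ j, π j * X ω j := funext hΔ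
    rw [h, integral_sub imT iL]
  have hYS : ∫ ω, Y ω * (T ω - ∑ j, π j * X ω j) ∂μ
      = (∫ ω, Y ω * T ω ∂μ) - ∫ ω, Y ω * ∑ j, π j * X ω j ∂μ := by
    have h : (fun ω => Y ω * (T ω - ∑ j, π j * X ω j))
        = fun ω => Y ω * T ω - Y ω * ∑ j, π j * X ω j := by funext ω; ring
    rw [h, integral_sub iYT iYL]
  have hYΔ : ∫ ω, Y ω * Δ ω ∂μ
      = (∫ ω, Y ω * μT ω ∂μ) - ∫ ω, Y ω * ∑ j, π j * X ω j ∂μ := by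
    have h : (fun ω => Y ω * Δ ω)
        = fun ω => Y ω * μT ω - Y ω * ∑ j, π j * X ω j := by funext ω; rw [hΔ]; ring
    rw [h, integral_sub iYmT iYL]
  have hEVar' : EVar = (∫ ω, T ω * T ω ∂μ) - ∫ ω, μT ω * μT ω ∂μ := by
    rw [hEVar]
    have h : (fun ω => condVarT ω) = fun ω => μT2 ω - μT ω * μT ω := by
      funext ω; rw [hcondVarT]; ring
    calc ∫ ω, condVarT ω ∂μ = ∫ ω, (μT2 ω - μT ω * μT ω) ∂μ := by rw [h]
      _ = (∫ ω, μT2 ω ∂μ) - ∫ ω, μT ω * μT ω ∂μ := integral_sub iμT2 imTmT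
      _ = (∫ ω, T ω * T ω ∂μ) - ∫ ω, μT ω * μT ω ∂μ := by rw [E5]
  have hCC : ∫ ω, condCovYT ω ∂μ = (∫ ω, Y ω * T ω ∂μ) - ∫ ω, μY ω * μT ω ∂μ := by
    have h : (fun ω => condCovYT ω) = fun ω => μYT ω - μY ω * μT ω := by
      funext ω; rw [hcondCovYT]
    calc ∫ ω, condCovYT ω ∂μ = ∫ ω, (μYT ω - μY ω * μT ω) ∂μ := by rw [h]
      _ = (∫ ω, μYT ω ∂μ) - ∫ ω, μY ω * μT ω ∂μ := integral_sub iμYT imYmT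
      _ = _ := by rw [E4]
  -- variance decomposition
  have hVar_eq : pvar μ (fun ω => T ω - ∑ j, π j * X ω j) = EVar + pvar μ Δ := by
    simp only [pvar, pcov]
    rw [hS2, hS1, hΔ2, hΔ1, hEVar', E1, E2]
    ring
  -- covariance decomposition
  have hCov_eq : pcov μ Y (fun ω => T ω - ∑ j, π j * X ω j)
      = (∫ ω, condCovYT ω ∂μ) + pcov μ Y Δ := by
    simp only [pcov]
    rw [hYS, hS1, hYΔ, hΔ1, hCC, E1, E3]
    ring
  -- assemble
  have hc : 0 < EVar + pvar μ Δ := add_pos hEVarpos hVarΔpos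
  have hIw : ∫ ω, betaX ω * w1 ω ∂μ = (∫ ω, condCovYT ω ∂μ) / (EVar + pvar μ Δ) := by
    have hae : (fun ω => betaX ω * w1 ω)
        =ᵐ[μ] fun ω => condCovYT ω / (EVar + pvar μ Δ) := by
      filter_upwards [hcondVarT_pos] with ω hω
      rw [hbetaX, hw1]
      field_simp
    rw [integral_congr_ae hae, integral_div]
  rw [hβ, hβΔ, hw0, hIw, hVar_eq, hCov_eq]
  field_simp
end

section
/- Uniqueness of the NRWE weights: fix a joint density f_{T,X} of (T, X) with marginal f_X and conditional density f_{T|X}, with 0 < Var(T | X = x) < ∞ for almost every x, and let b*(t, x) := f_X(x) · s(t, x)/E_X[Var(T | X)] where s(t, x) := ∫_t^∞ (u − μ(x)) f_{T|X}(u|x) du. Suppose a : ℝ × ℝ^d → ℝ is absolutely integrable and, for each x, continuous and differentiable in t, and suppose that for every function m : ℝ × ℝ^d → ℝ that is differentiable in t with continuous derivative and E[|∂_t m(T, X)|] < ∞, one has ∫∫ ∂_t m(t, x) a(t, x) dt dx = ∫∫ ∂_t m(t, x) b*(t, x) dt dx. Then a(t, x) = b*(t, x) for Lebesgue-almost every (t,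 x). -/
open MeasureTheory

namespace Stmt13Aux

open Set Filter

noncomputable def bump (q r : ℝ) (n : ℕ) (t : ℝ) : ℝ :=
  max 0 (min 1 ((n + 1 : ℝ) * (t - q) + 1)) * max 0 (min 1 ((n + 1 : ℝ) * (r - t) + 1))

lemma bump_nonneg (q r : ℝ) (n : ℕ) (t : ℝ) : 0 ≤ bump q r n t :=
  mul_nonneg (le_max_left _ _) (le_max_left _ _)

lemma bump_le_one (q r : ℝ) (n : ℕ) (t : ℝ) : bump q r n t ≤ 1 :=
  mul_le_one₀ (max_le zero_le_one (min_le_left _ _)) (le_max_left _ _)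
    (max_le zero_le_one (min_le_left _ _))

lemma bump_abs_le_one (q r : ℝ) (n : ℕ) (t : ℝ) : |bump q r n t| ≤ 1 :=
  abs_le.2 ⟨by linarith [bump_nonneg q r n t], bump_le_one q r n t⟩

lemma bump_continuous (q r : ℝ) (n : ℕ) : Continuous (bump q r n) := by
  unfold bump
  fun_prop

lemma bump_eq_one {q r t : ℝ} (n : ℕ) (h : t ∈ Icc q r) : bump q r n t = 1 := by
  have hn : (1 : ℝ) ≤ n + 1 := by norm_num
  have h1 : (1 : ℝ) ≤ (n + 1 : ℝ) * (t - q) + 1 := by nlinarith [h.1, h.2]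
  have h2 : (1 : ℝ) ≤ (n + 1 : ℝ) * (r - t) + 1 := by nlinarith [h.1, h.2]
  rw [bump, min_eq_left h1, max_eq_right zero_le_one, min_eq_left h2,
    max_eq_right zero_le_one, one_mul]

lemma bump_eq_zero {q r t : ℝ} (n : ℕ) (h : t ∉ Icc (q - 1) (r + 1)) : bump q r n t = 0 := by
  have hn : (0 : ℝ) ≤ n := Nat.cast_nonneg n
  simp only [mem_Icc, not_and_or, not_le] at h
  rcases h with h' | h'
  · have h2 : (n + 1 : ℝ) * (t - q) + 1 ≤ 0 := by nlinarith
    rw [bump, max_eq_left ((min_le_right _ _).trans h2), zero_mul]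
  · have h2 : (n + 1 : ℝ) * (r - t) + 1 ≤ 0 := by nlinarith
    rw [bump, max_eq_left ((min_le_right _ _).trans h2), mul_zero]

lemma bump_tendsto (q r t : ℝ) :
    Tendsto (fun n : ℕ => bump q r n t) atTop
      (nhds (Set.indicator (Icc q r) (fun _ => (1 : ℝ)) t)) := by
  by_cases h : t ∈ Icc q r
  · rw [Set.indicator_of_mem h]
    exact Tendsto.congr (fun n => (bump_eq_one n h).symm) tendsto_const_nhds
  · rw [Set.indicator_of_notMem h]
    have hev : ∀ᶠ n : ℕ in atTop, bump q r n t = 0 := by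
      rw [mem_Icc, not_and_or, not_le, not_le] at h
      rcases h with h' | h'
      · refine eventually_atTop.2 ⟨⌈1 / (q - t)⌉₊, fun n hn => ?_⟩
        have hq : 0 < q - t := by linarith
        have h1 : 1 / (q - t) ≤ (n : ℝ) := le_trans (Nat.le_ceil _) (by exact_mod_cast hn)
        have h3 : 1 ≤ (n : ℝ) * (q - t) := by
          rw [div_le_iff₀ hq] at h1; linarith
        have h2 : (n + 1 : ℝ) * (t - q) + 1 ≤ 0 := by nlinarith
        rw [bump, max_eq_left ((min_le_right _ _).trans h2), zero_mul]
      · refine eventually_atTop.2 ⟨⌈1 / (t - r)⌉₊, fun n hn => ?_⟩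
        have hq : 0 < t - r := by linarith
        have h1 : 1 / (t - r) ≤ (n : ℝ) := le_trans (Nat.le_ceil _) (by exact_mod_cast hn)
        have h3 : 1 ≤ (n : ℝ) * (t - r) := by
          rw [div_le_iff₀ hq] at h1; linarith
        have h2 : (n + 1 : ℝ) * (r - t) + 1 ≤ 0 := by nlinarith
        rw [bump, max_eq_left ((min_le_right _ _).trans h2), mul_zero]
    exact Tendsto.congr' (Filter.EventuallyEq.symm hev) tendsto_const_nhds

end Stmt13Aux

open Stmt13Aux Set Filter

/-- **uniqueness of the NRWE weights.** Fix the joint distribution of `(T,X)`,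
given by a joint density `fTX(t|x) fX(x)` with `0 < Var(T|X=x) < ∞` for a.e. `x`, and let
`b*(t,x) = fX(x) s(t,x)/E_X[Var(T|X)]` with `s(t,x) = ∫_t^∞ (u - μ(x)) f_{T|X}(u|x) du`.
If an absolutely integrable weight function `a(t,x)`, continuous and differentiable in `t`,
represents the same functional `m ↦ ∫∫ ∂ₜ m(t,x) · (weight) dt dx` as `b*` on every
data-generating process `m` that is differentiable in `t` with continuous derivative and
`E[|∂ₜ m(T,X)|] < ∞`, then `a = b*` Lebesgue-almost everywhere. -/
theorem stmt13 {Ω : Type*} [MeasurableSpace Ω] (μ : Measure Ω) [IsProbabilityMeasure μ]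
    {d : ℕ} (T : Ω → ℝ) (X : Ω → Fin d → ℝ)
    (hT : MemLp T 2 μ) (hTmeas : Measurable T) (hXmeas : Measurable X)
    -- the joint density of `(T, X)`: conditional density `fTX` times marginal `fX`
    (fX : (Fin d → ℝ) → ℝ) (fTX : ℝ → (Fin d → ℝ) → ℝ)
    (hfX_nonneg : ∀ x, 0 ≤ fX x) (hfX_meas : Measurable fX)
    (hfX_int : Integrable fX (volume : Measure (Fin d → ℝ)))
    (hfX_one : ∫ x : Fin d → ℝ, fX x = 1)
    (hf_nonneg : ∀ t x, 0 ≤ fTX t x)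
    (hf_meas : Measurable (Function.uncurry fTX))
    (hf_L1 : ∀ x, Integrable (fun u => fTX u x))
    (hf_one : ∀ x, ∫ u, fTX u x = 1)
    (hf_mean_int : ∀ x, Integrable (fun u => u * fTX u x))
    (hjoint : Measure.map (fun ω => (T ω, X ω)) μ
      = (volume : Measure (ℝ × (Fin d → ℝ))).withDensity
          fun p => ENNReal.ofReal (fTX p.1 p.2 * fX p.2))
    -- conditional mean and conditional variance, with `0 < Var(T|X=x) < ∞` for a.e. `x`
    (μx : (Fin d → ℝ) → ℝ) (hμx : ∀ x, μx x = ∫ u, u * fTX u x)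
    (varx : (Fin d → ℝ) → ℝ) (hvarx : ∀ x, varx x = ∫ u, (u - μx x) ^ 2 * fTX u x)
    (hvarx_int : ∀ x, Integrable (fun u => (u - μx x) ^ 2 * fTX u x))
    (hvarx_pos : ∀ᵐ x ∂(volume : Measure (Fin d → ℝ)), 0 < varx x)
    -- `0 < E_X[Var(T|X)] < ∞`
    (EVar : ℝ) (hEVar : EVar = ∫ x : Fin d → ℝ, varx x * fX x)
    (hEVarInt : Integrable (fun x : Fin d → ℝ => varx x * fX x))
    (hEVarpos : 0 < EVar)
    -- the NRWE weights `b*`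
    (s : ℝ → (Fin d → ℝ) → ℝ)
    (hs : ∀ t x, s t x = ∫ u in Set.Ioi t, (u - μx x) * fTX u x)
    (bstar : ℝ → (Fin d → ℝ) → ℝ)
    (hbstar : ∀ t x, bstar t x = fX x * s t x / EVar)
    -- the alternative weight function `a`
    (a : ℝ → (Fin d → ℝ) → ℝ)
    (ha_int : Integrable (fun p : ℝ × (Fin d → ℝ) => a p.1 p.2))
    (ha_cont : ∀ x, Continuous (fun t => a t x))
    (ha_diff : ∀ x, Differentiable ℝ (fun t => a t x))
    -- `a` represents the regression coefficient on every admissible data-generating process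
    (hrep : ∀ mfun : ℝ → (Fin d → ℝ) → ℝ,
      (∀ x, Differentiable ℝ (fun t => mfun t x)) →
      (∀ x, Continuous (deriv (fun t => mfun t x))) →
      Integrable (fun ω => deriv (fun t => mfun t (X ω)) (T ω)) μ →
      (∫ p : ℝ × (Fin d → ℝ), deriv (fun t => mfun t p.2) p.1 * a p.1 p.2)
        = ∫ p : ℝ × (Fin d → ℝ), deriv (fun t => mfun t p.2) p.1 * bstar p.1 p.2) :
    (fun p : ℝ × (Fin d → ℝ) => a p.1 p.2)
      =ᵐ[(volume : Measure (ℝ × (Fin d → ℝ)))] fun p => bstar p.1 p.2 := by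
  classical
  -- ## basic facts
  have hvarx_nonneg : ∀ x, 0 ≤ varx x := fun x => (hvarx x) ▸
    integral_nonneg (fun u => mul_nonneg (sq_nonneg _) (hf_nonneg u x))
  have hg_int : ∀ x, Integrable (fun u => (u - μx x) * fTX u x) := fun x =>
    ((hf_mean_int x).sub ((hf_L1 x).const_mul (μx x))).congr (ae_of_all _ fun u => by simp only [Pi.sub_apply]; ring)
  -- measurability of μx, s, bstar
  have hμx_meas : Measurable μx := by
    have h1 : Measurable (fun q : (Fin d → ℝ) × ℝ => q.2 * fTX q.2 q.1) :=
      measurable_snd.mul (hf_meas.comp (measurable_snd.prodMk measurable_fst))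
    have h2 : StronglyMeasurable fun x : Fin d → ℝ => ∫ u, u * fTX u x :=
      h1.stronglyMeasurable.integral_prod_right'
    have : μx = fun x => ∫ u, u * fTX u x := funext hμx
    rw [this]; exact h2.measurable
  have hs_meas : Measurable (fun p : ℝ × (Fin d → ℝ) => s p.1 p.2) := by
    have heq : (fun p : ℝ × (Fin d → ℝ) => s p.1 p.2)
        = fun p => ∫ u, (if p.1 < u then (u - μx p.2) * fTX u p.2 else 0) := by
      funext p
      rw [hs, ← integral_indicator measurableSet_Ioi]
      refine integral_congr_ae (ae_of_all _ fun u => ?_)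
      simp [Set.indicator_apply, Set.mem_Ioi]
    rw [heq]
    have h1 : Measurable (fun q : (ℝ × (Fin d → ℝ)) × ℝ =>
        if q.1.1 < q.2 then (q.2 - μx q.1.2) * fTX q.2 q.1.2 else 0) := by
      refine Measurable.ite (measurableSet_lt measurable_fst.fst measurable_snd) ?_ measurable_const
      exact (measurable_snd.sub (hμx_meas.comp measurable_fst.snd)).mul
        (hf_meas.comp (measurable_snd.prodMk measurable_fst.snd))
    exact (StronglyMeasurable.integral_prod_right' (f := fun q : (ℝ × (Fin d → ℝ)) × ℝ =>
      if q.1.1 < q.2 then (q.2 - μx q.1.2) * fTX q.2 q.1.2 else 0)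
      h1.stronglyMeasurable).measurable
  have hb_meas : Measurable (fun p : ℝ × (Fin d → ℝ) => bstar p.1 p.2) := by
    have : (fun p : ℝ × (Fin d → ℝ) => bstar p.1 p.2)
        = fun p => fX p.2 * s p.1 p.2 / EVar := by funext p; rw [hbstar]
    rw [this]
    exact ((hfX_meas.comp measurable_snd).mul hs_meas).div_const _
  -- ## the pointwise bound on s and bstar
  have habs : ∀ t x, |s t x| ≤ (1 + varx x) / 2 := by
    intro t x
    have hint := hg_int x
    have hint2 : Integrable (fun u => (1 + (u - μx x) ^ 2) / 2 * fTX u x) :=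
      (((hf_L1 x).add (hvarx_int x)).div_const 2).congr
        (ae_of_all _ fun u => by simp only [Pi.add_apply]; ring)
    rw [hs]
    calc |∫ u in Set.Ioi t, (u - μx x) * fTX u x|
        ≤ ∫ u in Set.Ioi t, |(u - μx x) * fTX u x| := by
          have h := norm_integral_le_integral_norm (μ := volume.restrict (Set.Ioi t))
            (fun u => (u - μx x) * fTX u x)
          simp only [Real.norm_eq_abs] at h
          exact h
      _ ≤ ∫ u, |(u - μx x) * fTX u x| :=
          setIntegral_le_integral hint.abs (ae_of_all _ fun u => abs_nonneg _)
      _ ≤ ∫ u, (1 + (u - μx x) ^ 2) / 2 * fTX u x := by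
          refine integral_mono hint.abs hint2 (fun u => ?_)
          rw [abs_mul, abs_of_nonneg (hf_nonneg u x)]
          refine mul_le_mul_of_nonneg_right ?_ (hf_nonneg u x)
          nlinarith [sq_nonneg (|u - μx x| - 1), sq_abs (u - μx x)]
      _ = (1 + varx x) / 2 := by
          have e : (fun u => (1 + (u - μx x) ^ 2) / 2 * fTX u x)
              = fun u => (fTX u x + (u - μx x) ^ 2 * fTX u x) / 2 := funext fun u => by ring
          rw [e, integral_div, integral_add (hf_L1 x) (hvarx_int x), hf_one, ← hvarx]
  have hb_bound : ∀ t x, |bstar t x| ≤ fX x * ((1 + varx x) / 2) / EVar := by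
    intro t x
    rw [hbstar, abs_div, abs_mul, abs_of_nonneg (hfX_nonneg x), abs_of_pos hEVarpos]
    exact div_le_div_of_nonneg_right (mul_le_mul_of_nonneg_left (habs t x) (hfX_nonneg x)) hEVarpos.le
  -- integrable majorant
  have hw_int : Integrable (fun x : Fin d → ℝ => fX x * ((1 + varx x) / 2) / EVar) := by
    have h1 : Integrable (fun x : Fin d → ℝ => (fX x + varx x * fX x) * (1 / (2 * EVar))) :=
      (hfX_int.add hEVarInt).mul_const _
    exact h1.congr (ae_of_all _ fun x => by field_simp)
  have hw_nonneg : ∀ x, 0 ≤ fX x * ((1 + varx x) / 2) / EVar := fun x =>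
    div_nonneg (mul_nonneg (hfX_nonneg x) (by nlinarith [hvarx_nonneg x])) hEVarpos.le
  have hind_int : ∀ R : ℝ, Integrable (fun p : ℝ × (Fin d → ℝ) =>
      (Set.Icc (-R) R).indicator (fun _ => (1 : ℝ)) p.1 * (fX p.2 * ((1 + varx p.2) / 2) / EVar))
      (volume : Measure (ℝ × (Fin d → ℝ))) := by
    intro R
    rw [Measure.volume_eq_prod]
    refine Integrable.mul_prod ?_ hw_int
    exact (integrableOn_const measure_Icc_lt_top.ne).integrable_indicator measurableSet_Icc
  -- ## key step B : for every admissible test function ψ, the partial integral vanishes a.e.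
  have keyB : ∀ (ψ : ℝ → ℝ) (R : ℝ), Continuous ψ → (∀ t, |ψ t| ≤ 1) →
      (∀ t, t ∉ Set.Icc (-R) R → ψ t = 0) →
      ∀ᵐ x ∂(volume : Measure (Fin d → ℝ)), (∫ t, ψ t * (a t x - bstar t x)) = 0 := by
    intro ψ R hψc hψ1 hψR
    -- integrability of ψ·a and ψ·bstar on the product space
    have Iψa : Integrable (fun p : ℝ × (Fin d → ℝ) => ψ p.1 * a p.1 p.2) :=
      ha_int.bdd_mul (c := 1) ((hψc.comp continuous_fst).aestronglyMeasurable)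
        (ae_of_all _ fun p => by simpa [Real.norm_eq_abs] using hψ1 p.1)
    have Iψb : Integrable (fun p : ℝ × (Fin d → ℝ) => ψ p.1 * bstar p.1 p.2) := by
      refine Integrable.mono' (hind_int R)
        (((hψc.comp continuous_fst).aestronglyMeasurable).mul hb_meas.aestronglyMeasurable)
        (ae_of_all _ fun p => ?_)
      rw [Real.norm_eq_abs, abs_mul]
      by_cases hp : p.1 ∈ Set.Icc (-R) R
      · rw [Set.indicator_of_mem hp, one_mul]
        exact le_trans (mul_le_of_le_one_left (abs_nonneg _) (hψ1 p.1)) (hb_bound p.1 p.2)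
      · rw [hψR p.1 hp, abs_zero, zero_mul, Set.indicator_of_notMem hp, zero_mul]
    have IF : Integrable (fun p : ℝ × (Fin d → ℝ) => ψ p.1 * (a p.1 p.2 - bstar p.1 p.2)) := by
      refine (Iψa.sub Iψb).congr (ae_of_all _ fun p => ?_)
      simp only [Pi.sub_apply]; ring
    -- key step A : testing against mfun t x = (∫₀ᵗ ψ) ⬝ φ x
    have keyA : ∀ φ : (Fin d → ℝ) → ℝ, Measurable φ → (∀ x, |φ x| ≤ 1) →
        (∫ p : ℝ × (Fin d → ℝ), φ p.2 * (ψ p.1 * (a p.1 p.2 - bstar p.1 p.2))) = 0 := by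
      intro φ hφm hφ1
      set mfun : ℝ → (Fin d → ℝ) → ℝ := fun t x => (∫ u in (0:ℝ)..t, ψ u) * φ x with hmfun
      have hder : ∀ (x : Fin d → ℝ) (t : ℝ), HasDerivAt (fun t => mfun t x) (ψ t * φ x) t :=
        fun x t => ((hψc.integral_hasStrictDerivAt 0 t).hasDerivAt).mul_const (φ x)
      have hderiv_eq : ∀ x, deriv (fun t => mfun t x) = fun t => ψ t * φ x :=
        fun x => funext fun t => (hder x t).deriv
      have h1 : ∀ x, Differentiable ℝ (fun t => mfun t x) :=
        fun x t => (hder x t).differentiableAt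
      have h2 : ∀ x, Continuous (deriv fun t => mfun t x) := fun x => by
        rw [hderiv_eq x]; exact hψc.mul continuous_const
      have h3 : Integrable (fun ω => deriv (fun t => mfun t (X ω)) (T ω)) μ := by
        have he : (fun ω => deriv (fun t => mfun t (X ω)) (T ω))
            = fun ω => ψ (T ω) * φ (X ω) := funext fun ω => by rw [hderiv_eq (X ω)]
        rw [he]
        refine Integrable.mono' (integrable_const (1:ℝ))
          (((hψc.measurable.comp hTmeas).mul (hφm.comp hXmeas)).aestronglyMeasurable)
          (ae_of_all _ fun ω => ?_)
        rw [Real.norm_eq_abs, abs_mul]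
        exact mul_le_one₀ (hψ1 _) (abs_nonneg _) (hφ1 _)
      have h4 := hrep mfun h1 h2 h3
      have ea : (fun p : ℝ × (Fin d → ℝ) => deriv (fun t => mfun t p.2) p.1 * a p.1 p.2)
          = fun p => ψ p.1 * φ p.2 * a p.1 p.2 := funext fun p => by rw [hderiv_eq p.2]
      have eb : (fun p : ℝ × (Fin d → ℝ) => deriv (fun t => mfun t p.2) p.1 * bstar p.1 p.2)
          = fun p => ψ p.1 * φ p.2 * bstar p.1 p.2 := funext fun p => by rw [hderiv_eq p.2]
      rw [ea, eb] at h4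
      have Ia' : Integrable (fun p : ℝ × (Fin d → ℝ) => ψ p.1 * φ p.2 * a p.1 p.2) := by
        refine (Iψa.bdd_mul (c := 1) ((hφm.comp measurable_snd).aestronglyMeasurable)
          (ae_of_all _ fun p => by simpa [Real.norm_eq_abs] using hφ1 p.2)).congr
          (ae_of_all _ fun p => by simp only [Function.comp_apply]; ring)
      have Ib' : Integrable (fun p : ℝ × (Fin d → ℝ) => ψ p.1 * φ p.2 * bstar p.1 p.2) := by
        refine (Iψb.bdd_mul (c := 1) ((hφm.comp measurable_snd).aestronglyMeasurable)
          (ae_of_all _ fun p => by simpa [Real.norm_eq_abs] using hφ1 p.2)).congr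
          (ae_of_all _ fun p => by simp only [Function.comp_apply]; ring)
      calc (∫ p : ℝ × (Fin d → ℝ), φ p.2 * (ψ p.1 * (a p.1 p.2 - bstar p.1 p.2)))
          = ∫ p : ℝ × (Fin d → ℝ),
              (ψ p.1 * φ p.2 * a p.1 p.2 - ψ p.1 * φ p.2 * bstar p.1 p.2) := by
            refine integral_congr_ae (ae_of_all _ fun p => ?_); ring
        _ = (∫ p : ℝ × (Fin d → ℝ), ψ p.1 * φ p.2 * a p.1 p.2)
              - ∫ p : ℝ × (Fin d → ℝ), ψ p.1 * φ p.2 * bstar p.1 p.2 :=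
            integral_sub Ia' Ib'
        _ = 0 := by rw [h4, sub_self]
    -- Fubini: the inner integral G vanishes a.e.
    have IFp : Integrable (fun p : ℝ × (Fin d → ℝ) => ψ p.1 * (a p.1 p.2 - bstar p.1 p.2))
        ((volume : Measure ℝ).prod (volume : Measure (Fin d → ℝ))) := by
      rwa [← Measure.volume_eq_prod]
    have hGint : Integrable (fun x => ∫ t, ψ t * (a t x - bstar t x))
        (volume : Measure (Fin d → ℝ)) := by
      have h := IFp.integral_prod_right
      exact h
    set G : (Fin d → ℝ) → ℝ := fun x => ∫ t, ψ t * (a t x - bstar t x) with hG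
    set G₀ : (Fin d → ℝ) → ℝ := hGint.aestronglyMeasurable.mk G with hG0
    have hGae : G =ᵐ[volume] G₀ := hGint.aestronglyMeasurable.ae_eq_mk
    set φ : (Fin d → ℝ) → ℝ := fun x => if 0 < G₀ x then 1 else -1 with hφ
    have hφm : Measurable φ := Measurable.ite
      (measurableSet_lt measurable_const hGint.aestronglyMeasurable.stronglyMeasurable_mk.measurable)
      measurable_const measurable_const
    have hφ1 : ∀ x, |φ x| ≤ 1 := fun x => by
      simp only [hφ]; split_ifs <;> simp
    have h0 := keyA φ hφm hφ1
    -- turn the product integral into an iterated one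
    have Iφ : Integrable (fun p : ℝ × (Fin d → ℝ) => φ p.2 * (ψ p.1 * (a p.1 p.2 - bstar p.1 p.2)))
        ((volume : Measure ℝ).prod (volume : Measure (Fin d → ℝ))) :=
      IFp.bdd_mul (c := 1) ((hφm.comp measurable_snd).aestronglyMeasurable)
        (ae_of_all _ fun p => by simpa [Real.norm_eq_abs] using hφ1 p.2)
    have h5 : (∫ x : Fin d → ℝ, φ x * G x) = 0 := by
      rw [← h0]
      rw [show (∫ p : ℝ × (Fin d → ℝ), φ p.2 * (ψ p.1 * (a p.1 p.2 - bstar p.1 p.2)))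
        = ∫ p, φ p.2 * (ψ p.1 * (a p.1 p.2 - bstar p.1 p.2))
            ∂((volume : Measure ℝ).prod (volume : Measure (Fin d → ℝ))) from by
          rw [← Measure.volume_eq_prod]]
      rw [integral_prod_symm _ Iφ]
      refine integral_congr_ae (ae_of_all _ fun x => ?_)
      exact (integral_const_mul (φ x) _).symm
    have h6 : ∀ᵐ x ∂(volume : Measure (Fin d → ℝ)), φ x * G x = |G x| := by
      filter_upwards [hGae] with x hx
      simp only [hφ]
      by_cases hc : 0 < G₀ x
      · rw [if_pos hc, one_mul, abs_of_pos (by rw [hx]; exact hc)]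
      · rw [if_neg hc, abs_of_nonpos (by rw [hx]; linarith [not_lt.mp hc]), neg_one_mul]
    have h7 : (∫ x : Fin d → ℝ, |G x|) = 0 := by
      rw [← integral_congr_ae h6, h5]
    have h8 : (fun x => |G x|) =ᵐ[(volume : Measure (Fin d → ℝ))] 0 :=
      (integral_eq_zero_iff_of_nonneg_ae (ae_of_all _ fun x => abs_nonneg _) hGint.abs).mp h7
    filter_upwards [h8] with x hx
    exact abs_eq_zero.mp hx
  -- ## apply keyB to the countable family of bump functions
  have hae_all : ∀ᵐ x ∂(volume : Measure (Fin d → ℝ)),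
      ∀ (q r : ℚ) (n : ℕ), (∫ t, bump (q : ℝ) (r : ℝ) n t * (a t x - bstar t x)) = 0 := by
    rw [ae_all_iff]; intro q
    rw [ae_all_iff]; intro r
    rw [ae_all_iff]; intro n
    refine keyB (bump (q:ℝ) (r:ℝ) n) (max (1 - (q:ℝ)) ((r:ℝ) + 1)) (bump_continuous _ _ _)
      (bump_abs_le_one _ _ _) (fun t ht => ?_)
    refine bump_eq_zero n (fun hmem => ht ?_)
    rw [Set.mem_Icc] at hmem ⊢
    have h1 := le_max_left (1 - (q:ℝ)) ((r:ℝ) + 1)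
    have h2 := le_max_right (1 - (q:ℝ)) ((r:ℝ) + 1)
    constructor
    · linarith [hmem.1]
    · linarith [hmem.2]
  -- ## pointwise argument for each good x
  have main : ∀ x : Fin d → ℝ,
      (∀ (q r : ℚ) (n : ℕ), (∫ t, bump (q:ℝ) (r:ℝ) n t * (a t x - bstar t x)) = 0) →
      ∀ t, a t x = bstar t x := by
    intro x hx
    have hgx := hg_int x
    have hsx_cont : Continuous (fun t => s t x) := by
      have hsx : (fun t => s t x) = fun t => (∫ u, (u - μx x) * fTX u x)
          - ((∫ u in Set.Iic (0:ℝ), (u - μx x) * fTX u x)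
              + ∫ u in (0:ℝ)..t, (u - μx x) * fTX u x) := by
        funext t
        have e1 := intervalIntegral.integral_Iic_add_Ioi (b := t) hgx.integrableOn hgx.integrableOn
        have e2 := intervalIntegral.integral_Iic_sub_Iic (a := (0:ℝ)) (b := t)
          hgx.integrableOn hgx.integrableOn
        rw [hs]; linarith
      rw [hsx]
      exact continuous_const.sub (continuous_const.add (hgx.continuous_primitive 0))
    have hcont : Continuous (fun t => a t x - bstar t x) := by
      refine (ha_cont x).sub ?_
      have e : (fun t => bstar t x) = fun t => fX x * s t x / EVar := funext fun t => hbstar t x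
      rw [e]
      exact (continuous_const.mul hsx_cont).div_const _
    -- set integrals over rational compact intervals vanish
    have hIcc : ∀ q r : ℚ, (∫ t in Set.Icc (q:ℝ) (r:ℝ), (a t x - bstar t x)) = 0 := by
      intro q r
      have hdom : Integrable ((Set.Icc ((q:ℝ) - 1) ((r:ℝ) + 1)).indicator
          (fun t => |a t x - bstar t x|)) :=
        (hcont.abs.integrableOn_Icc).integrable_indicator measurableSet_Icc
      have hbound : ∀ n : ℕ, ∀ᵐ t ∂(volume : Measure ℝ),
          ‖bump (q:ℝ) (r:ℝ) n t * (a t x - bstar t x)‖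
            ≤ (Set.Icc ((q:ℝ) - 1) ((r:ℝ) + 1)).indicator
                (fun t => |a t x - bstar t x|) t := by
        intro n
        refine ae_of_all _ fun t => ?_
        by_cases ht : t ∈ Set.Icc ((q:ℝ) - 1) ((r:ℝ) + 1)
        · rw [Set.indicator_of_mem ht, Real.norm_eq_abs, abs_mul]
          exact mul_le_of_le_one_left (abs_nonneg _) (bump_abs_le_one _ _ _ _)
        · rw [Set.indicator_of_notMem ht, bump_eq_zero n ht, Real.norm_eq_abs, zero_mul,
            abs_zero]
      have hlim := tendsto_integral_of_dominated_convergence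
        (F := fun (n : ℕ) t => bump (q:ℝ) (r:ℝ) n t * (a t x - bstar t x))
        (f := fun t => (Set.Icc (q:ℝ) (r:ℝ)).indicator (fun _ => (1:ℝ)) t * (a t x - bstar t x))
        ((Set.Icc ((q:ℝ) - 1) ((r:ℝ) + 1)).indicator (fun t => |a t x - bstar t x|))
        (fun n => ((bump_continuous (q:ℝ) (r:ℝ) n).mul hcont).aestronglyMeasurable)
        hdom hbound
        (ae_of_all _ fun t => (bump_tendsto (q:ℝ) (r:ℝ) t).mul_const _)
      have hz : (fun n : ℕ => ∫ t, bump (q:ℝ) (r:ℝ) n t * (a t x - bstar t x))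
          = fun _ => (0:ℝ) := funext fun n => hx q r n
      rw [hz] at hlim
      have h0 := tendsto_nhds_unique hlim tendsto_const_nhds
      have hident : (∫ t, (Set.Icc (q:ℝ) (r:ℝ)).indicator (fun _ => (1:ℝ)) t
            * (a t x - bstar t x))
          = ∫ t in Set.Icc (q:ℝ) (r:ℝ), (a t x - bstar t x) := by
        rw [← integral_indicator measurableSet_Icc]
        refine integral_congr_ae (ae_of_all _ fun t => ?_)
        simp only [Set.indicator_apply]
        split_ifs <;> simp
      rw [← hident]
      exact h0
    -- the primitive vanishes at rational points, hence everywhere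
    have hP0 : ∀ c : ℚ, (∫ u in (0:ℝ)..(c:ℝ), (a u x - bstar u x)) = 0 := by
      intro c
      rcases le_or_gt (0:ℝ) (c:ℝ) with hc | hc
      · rw [intervalIntegral.integral_of_le hc, ← integral_Icc_eq_integral_Ioc]
        simpa using hIcc 0 c
      · have h1 : (∫ u in (c:ℝ)..(0:ℝ), (a u x - bstar u x)) = 0 := by
          rw [intervalIntegral.integral_of_le hc.le, ← integral_Icc_eq_integral_Ioc]
          simpa using hIcc c 0
        rw [intervalIntegral.integral_symm ((c:ℝ)) ((0:ℝ)), h1, neg_zero]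
    have hPcont : Continuous (fun t => ∫ u in (0:ℝ)..t, (a u x - bstar u x)) :=
      intervalIntegral.continuous_primitive (fun c1 c2 => hcont.intervalIntegrable c1 c2) 0
    have hPzero : (fun t => ∫ u in (0:ℝ)..t, (a u x - bstar u x)) = fun _ => (0:ℝ) := by
      refine Continuous.ext_on Rat.denseRange_cast hPcont continuous_const ?_
      rintro t ⟨c, rfl⟩
      exact hP0 c
    intro t
    have hd := Continuous.deriv_integral (fun u => a u x - bstar u x) hcont 0 t
    rw [hPzero] at hd
    have h0 : a t x - bstar t x = 0 := by rw [← hd]; simp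
    linarith
  -- ## conclusion
  have hgood : ∀ᵐ x ∂(volume : Measure (Fin d → ℝ)), ∀ t, a t x = bstar t x :=
    hae_all.mono fun x hx => main x hx
  have hnull : (volume : Measure (Fin d → ℝ)) {x | ¬ ∀ t, a t x = bstar t x} = 0 :=
    ae_iff.mp hgood
  obtain ⟨N, hsubN, hNmeas, hN0⟩ := exists_measurable_superset_of_null hnull
  rw [Filter.EventuallyEq, ae_iff]
  refine measure_mono_null (t := Set.univ ×ˢ N) (fun p hp => ?_) ?_
  · exact ⟨trivial, hsubN fun hall => hp (hall p.1)⟩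
  · rw [Measure.volume_eq_prod, Measure.prod_prod, hN0, mul_zero]
end
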